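/- arXiv:math/0603183 — 9 statements merged into one kernel-verified Lean document; each statement's English description precedes it below -/
import Mathlib

section
/- Let R be a regular set of sequences, let Ω ⊆ ℝ^d be open, and let (f_ε)_{ε∈(0,1]} and (g_ε)_{ε∈(0,1]} be nets of smooth functions Ω → ℂ such that for every compact K ⊆ Ω there exists N ∈ R with p_{K,l}(f_ε) = O(ε^{-N(l)}) as ε→0 for all l ∈ ℕ, and likewise for (g_ε) (with possibly another N ∈ R). Then the pointwise product net (f_ε g_ε)_{ε} satisfies the same condition: for every compact K ⊆ Ω there exists N ∈ R with p_{K,l}(f_ε g_ε) = O(ε^{-N(l)}) as ε→0 for all l ∈ ℕ. -/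
open Set

/-- A regular set of sequences `N : ℕ → [0,∞)`. -/
def IsRegularSeq (R : Set (ℕ → ℝ)) : Prop :=
  R.Nonempty ∧ (∀ N ∈ R, ∀ n : ℕ, 0 ≤ N n) ∧
  (∀ N ∈ R, ∀ k k' : ℕ, ∃ N' ∈ R, ∀ n : ℕ, N (n + k) + (k' : ℝ) ≤ N' n) ∧
  (∀ N₁ ∈ R, ∀ N₂ ∈ R, ∃ N₃ ∈ R, ∀ n : ℕ, max (N₁ n) (N₂ n) ≤ N₃ n) ∧
  (∀ N₁ ∈ R, ∀ N₂ ∈ R, ∃ N₃ ∈ R, ∀ l₁ l₂ : ℕ, N₁ l₁ + N₂ l₂ ≤ N₃ (l₁ + l₂))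

/-- The product of two `R`-moderate nets of smooth functions on an open set `Ω ⊆ ℝ^d`
is again `R`-moderate. -/
theorem stmt0 (d : ℕ) (R : Set (ℕ → ℝ)) (hR : IsRegularSeq R)
    (Ω : Set (EuclideanSpace ℝ (Fin d))) (hΩ : IsOpen Ω)
    (f g : ℝ → EuclideanSpace ℝ (Fin d) → ℂ)
    (hf_smooth : ∀ ε ∈ Ioc (0:ℝ) 1, ContDiffOn ℝ (⊤ : ℕ∞) (f ε) Ω)
    (hg_smooth : ∀ ε ∈ Ioc (0:ℝ) 1, ContDiffOn ℝ (⊤ : ℕ∞) (g ε) Ω)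
    (hf : ∀ K : Set (EuclideanSpace ℝ (Fin d)), K ⊆ Ω → IsCompact K →
      ∃ N ∈ R, ∀ l : ℕ, ∃ C > (0:ℝ), ∃ ε₀ ∈ Ioc (0:ℝ) 1, ∀ ε ∈ Ioo (0:ℝ) ε₀,
        ∀ x ∈ K, ∀ n ≤ l, ‖iteratedFDerivWithin ℝ n (f ε) Ω x‖ ≤ C * ε ^ (-(N l)))
    (hg : ∀ K : Set (EuclideanSpace ℝ (Fin d)), K ⊆ Ω → IsCompact K →
      ∃ N ∈ R, ∀ l : ℕ, ∃ C > (0:ℝ), ∃ ε₀ ∈ Ioc (0:ℝ) 1, ∀ ε ∈ Ioo (0:ℝ) ε₀,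
        ∀ x ∈ K, ∀ n ≤ l, ‖iteratedFDerivWithin ℝ n (g ε) Ω x‖ ≤ C * ε ^ (-(N l))) :
    ∀ K : Set (EuclideanSpace ℝ (Fin d)), K ⊆ Ω → IsCompact K →
      ∃ N ∈ R, ∀ l : ℕ, ∃ C > (0:ℝ), ∃ ε₀ ∈ Ioc (0:ℝ) 1, ∀ ε ∈ Ioo (0:ℝ) ε₀,
        ∀ x ∈ K, ∀ n ≤ l,
          ‖iteratedFDerivWithin ℝ n (fun y => f ε y * g ε y) Ω x‖ ≤ C * ε ^ (-(N l)) := by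
  intro K hKΩ hK
  obtain ⟨N₁, hN₁R, hf'⟩ := hf K hKΩ hK
  obtain ⟨N₂, hN₂R, hg'⟩ := hg K hKΩ hK
  obtain ⟨-, hRpos, -, -, hsum⟩ := hR
  obtain ⟨P, hPR, hP⟩ := hsum N₁ hN₁R N₂ hN₂R
  obtain ⟨Q, hQR, hQ⟩ := hsum P hPR P hPR
  refine ⟨Q, hQR, fun l => ?_⟩
  choose Cf hCf εf hεf Hf using hf'
  choose Cg hCg εg hεg Hg using hg'
  have hne : (Finset.range (l + 1)).Nonempty := Finset.nonempty_range_add_one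
  set C₁ : ℝ := (Finset.range (l + 1)).sup' hne Cf with hC₁
  set C₂ : ℝ := (Finset.range (l + 1)).sup' hne Cg with hC₂
  have hC₁pos : 0 < C₁ :=
    lt_of_lt_of_le (hCf 0) (Finset.le_sup' Cf (Finset.mem_range_succ_iff.mpr (Nat.zero_le l)))
  have hC₂pos : 0 < C₂ :=
    lt_of_lt_of_le (hCg 0) (Finset.le_sup' Cg (Finset.mem_range_succ_iff.mpr (Nat.zero_le l)))
  set E : ℝ := (Finset.range (l + 1)).inf' hne (fun i => min (εf i) (εg i)) with hE
  have hEpos : 0 < E := by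
    rw [hE, Finset.lt_inf'_iff]
    exact fun i _ => lt_min (hεf i).1 (hεg i).1
  have hEle : ∀ i ≤ l, E ≤ min (εf i) (εg i) := fun i hi =>
    Finset.inf'_le _ (Finset.mem_range_succ_iff.mpr hi)
  have hE1 : E ≤ 1 := le_trans ((hEle 0 (Nat.zero_le l)).trans (min_le_left _ _)) (hεf 0).2
  refine ⟨2 ^ l * C₁ * C₂, by positivity, E, ⟨hEpos, hE1⟩, fun ε hε x hx n hn => ?_⟩
  have hε1 : ε ≤ 1 := le_trans hε.2.le hE1
  have hεpos : 0 < ε := hε.1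
  have hεIoc : ε ∈ Ioc (0:ℝ) 1 := ⟨hεpos, hε1⟩
  have hexp : ∀ i ≤ n, N₁ i + N₂ (n - i) ≤ Q l := by
    intro i hi
    have h1 : N₁ i + N₂ (n - i) ≤ P n := by
      have := hP i (n - i)
      rwa [Nat.add_sub_cancel' hi] at this
    have h2 : P n ≤ Q l := by
      have h3 : P n ≤ P n + P (l - n) := le_add_of_nonneg_right (hRpos P hPR _)
      have h4 := hQ n (l - n)
      rw [Nat.add_sub_cancel' hn] at h4
      exact h3.trans h4
    exact h1.trans h2
  have key := norm_iteratedFDerivWithin_mul_le (𝕜 := ℝ)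
    (hf_smooth ε hεIoc) (hg_smooth ε hεIoc) hΩ.uniqueDiffOn (hKΩ hx) ((by exact_mod_cast le_top) : (n : WithTop ℕ∞) ≤ ((⊤ : ℕ∞) : WithTop ℕ∞))
  refine key.trans ?_
  have hterm : ∀ i ∈ Finset.range (n + 1),
      (n.choose i : ℝ) * ‖iteratedFDerivWithin ℝ i (f ε) Ω x‖ *
        ‖iteratedFDerivWithin ℝ (n - i) (g ε) Ω x‖ ≤
      (n.choose i : ℝ) * (C₁ * C₂ * ε ^ (-(Q l))) := by
    intro i hi
    rw [Finset.mem_range] at hi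
    have hi' : i ≤ n := Nat.lt_succ_iff.mp hi
    have hil : i ≤ l := hi'.trans hn
    have hnil : n - i ≤ l := (Nat.sub_le n i).trans hn
    have hA : ‖iteratedFDerivWithin ℝ i (f ε) Ω x‖ ≤ Cf i * ε ^ (-(N₁ i)) :=
      Hf i ε ⟨hεpos, lt_of_lt_of_le hε.2 ((hEle i hil).trans (min_le_left _ _))⟩ x hx i le_rfl
    have hB : ‖iteratedFDerivWithin ℝ (n - i) (g ε) Ω x‖ ≤ Cg (n - i) * ε ^ (-(N₂ (n - i))) :=
      Hg (n - i) ε ⟨hεpos, lt_of_lt_of_le hε.2 ((hEle (n - i) hnil).trans (min_le_right _ _))⟩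
        x hx (n - i) le_rfl
    have hAB : ‖iteratedFDerivWithin ℝ i (f ε) Ω x‖ *
        ‖iteratedFDerivWithin ℝ (n - i) (g ε) Ω x‖ ≤
        (Cf i * Cg (n - i)) * ε ^ (-(N₁ i + N₂ (n - i))) := by
      have := mul_le_mul hA hB (norm_nonneg _)
        (mul_nonneg (hCf i).le (Real.rpow_nonneg hεpos.le _))
      calc ‖iteratedFDerivWithin ℝ i (f ε) Ω x‖ * ‖iteratedFDerivWithin ℝ (n - i) (g ε) Ω x‖
          ≤ Cf i * ε ^ (-(N₁ i)) * (Cg (n - i) * ε ^ (-(N₂ (n - i)))) := this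
        _ = (Cf i * Cg (n - i)) * (ε ^ (-(N₁ i)) * ε ^ (-(N₂ (n - i)))) := by ring
        _ = (Cf i * Cg (n - i)) * ε ^ (-(N₁ i + N₂ (n - i))) := by
            rw [← Real.rpow_add hεpos, neg_add]
    have hrpow : ε ^ (-(N₁ i + N₂ (n - i))) ≤ ε ^ (-(Q l)) :=
      Real.rpow_le_rpow_of_exponent_ge hεpos hε1 (neg_le_neg (hexp i hi'))
    have hCC : Cf i * Cg (n - i) ≤ C₁ * C₂ :=
      mul_le_mul (Finset.le_sup' Cf (Finset.mem_range_succ_iff.mpr hil))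
        (Finset.le_sup' Cg (Finset.mem_range_succ_iff.mpr hnil)) (hCg _).le hC₁pos.le
    have hfinal : ‖iteratedFDerivWithin ℝ i (f ε) Ω x‖ *
        ‖iteratedFDerivWithin ℝ (n - i) (g ε) Ω x‖ ≤ C₁ * C₂ * ε ^ (-(Q l)) :=
      hAB.trans (mul_le_mul hCC hrpow (Real.rpow_nonneg hεpos.le _)
        (mul_nonneg hC₁pos.le hC₂pos.le))
    rw [mul_assoc]
    exact mul_le_mul_of_nonneg_left hfinal (Nat.cast_nonneg _)
  refine (Finset.sum_le_sum hterm).trans ?_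
  rw [← Finset.sum_mul]
  have hsum2 : (∑ i ∈ Finset.range (n + 1), (n.choose i : ℝ)) = 2 ^ n := by
    rw [← Nat.cast_sum, Nat.sum_range_choose]
    push_cast
    ring
  rw [hsum2]
  have h2n : (2:ℝ) ^ n ≤ 2 ^ l := by
    apply pow_le_pow_right₀ (by norm_num) hn
  calc (2:ℝ) ^ n * (C₁ * C₂ * ε ^ (-(Q l)))
      ≤ 2 ^ l * (C₁ * C₂ * ε ^ (-(Q l))) := by
        apply mul_le_mul_of_nonneg_right h2n
        positivity
    _ = 2 ^ l * C₁ * C₂ * ε ^ (-(Q l)) := by ring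
end

section
/- Let R' be a regular set of double sequences, and let (f_ε)_{ε∈(0,1]} and (g_ε)_{ε∈(0,1]} be nets of Schwartz functions on ℝ^d such that there exists N_f ∈ R' with μ_{q,l}(f_ε) = O(ε^{-N_f(q,l)}) as ε→0 for all (q,l) ∈ ℕ², and there exists N_g ∈ R' with μ_{q,l}(g_ε) = O(ε^{-N_g(q,l)}) for all (q,l). Then there exists N ∈ R' such that the pointwise product net satisfies μ_{q,l}(f_ε g_ε) = O(ε^{-N(q,l)}) as ε→0 for all (q,l) ∈ ℕ². -/
open Set

/-- A regular set of double sequences `N : ℕ × ℕ → [0,∞)`. -/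
def IsRegularSeq2 (R' : Set (ℕ → ℕ → ℝ)) : Prop :=
  R'.Nonempty ∧ (∀ N ∈ R', ∀ q l : ℕ, 0 ≤ N q l) ∧
  (∀ N ∈ R', ∀ k k' k'' : ℕ, ∃ N' ∈ R', ∀ q l : ℕ,
    N (q + k) (l + k') + (k'' : ℝ) ≤ N' q l) ∧
  (∀ N₁ ∈ R', ∀ N₂ ∈ R', ∃ N₃ ∈ R', ∀ q l : ℕ, max (N₁ q l) (N₂ q l) ≤ N₃ q l) ∧
  (∀ N₁ ∈ R', ∀ N₂ ∈ R', ∃ N₃ ∈ R', ∀ q₁ q₂ l₁ l₂ : ℕ,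
    N₁ q₁ l₁ + N₂ q₂ l₂ ≤ N₃ (q₁ + q₂) (l₁ + l₂))

/-- The product of two `R'`-moderate nets of Schwartz functions is `R'`-moderate. -/
theorem stmt3 (d : ℕ) (R' : Set (ℕ → ℕ → ℝ)) (hR' : IsRegularSeq2 R')
    (f g : ℝ → SchwartzMap (EuclideanSpace ℝ (Fin d)) ℂ)
    (hf : ∃ Nf ∈ R', ∀ q l : ℕ, ∃ C > (0:ℝ), ∃ ε₀ ∈ Ioc (0:ℝ) 1, ∀ ε ∈ Ioo (0:ℝ) ε₀,
      ∀ x, ∀ n ≤ l, (1 + ‖x‖) ^ q * ‖iteratedFDeriv ℝ n (⇑(f ε)) x‖ ≤ C * ε ^ (-(Nf q l)))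
    (hg : ∃ Ng ∈ R', ∀ q l : ℕ, ∃ C > (0:ℝ), ∃ ε₀ ∈ Ioc (0:ℝ) 1, ∀ ε ∈ Ioo (0:ℝ) ε₀,
      ∀ x, ∀ n ≤ l, (1 + ‖x‖) ^ q * ‖iteratedFDeriv ℝ n (⇑(g ε)) x‖ ≤ C * ε ^ (-(Ng q l))) :
    ∃ N ∈ R', ∀ q l : ℕ, ∃ C > (0:ℝ), ∃ ε₀ ∈ Ioc (0:ℝ) 1, ∀ ε ∈ Ioo (0:ℝ) ε₀,
      ∀ x, ∀ n ≤ l,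
        (1 + ‖x‖) ^ q * ‖iteratedFDeriv ℝ n (fun y => f ε y * g ε y) x‖
          ≤ C * ε ^ (-(N q l)) := by
  obtain ⟨Nf, hNfR, hf⟩ := hf
  obtain ⟨Ng, hNgR, hg⟩ := hg
  obtain ⟨N₃, hN₃R, hN₃⟩ := hR'.2.2.2.2 Nf hNfR Ng hNgR
  refine ⟨N₃, hN₃R, fun q l => ?_⟩
  choose Cf hCf εf hεf hff using hf
  choose Cg hCg εg hεg hgg using hg
  have hS : (Finset.range (l + 1)).Nonempty := ⟨0, by simp⟩
  set ε₀ : ℝ := (Finset.range (l + 1)).inf' hS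
    (fun i => min (εf q i) (εg 0 (l - i))) with hε₀
  have hε₀pos : 0 < ε₀ := by
    rw [hε₀, Finset.lt_inf'_iff]
    intro i _
    exact lt_min (hεf q i).1 (hεg 0 (l - i)).1
  have hε₀le : ε₀ ≤ 1 := by
    calc ε₀ ≤ min (εf q 0) (εg 0 (l - 0)) := Finset.inf'_le _ (by simp)
      _ ≤ εf q 0 := min_le_left _ _
      _ ≤ 1 := (hεf q 0).2
  have hCpos : (0:ℝ) < (2:ℝ) ^ l * ∑ i ∈ Finset.range (l + 1), Cf q i * Cg 0 (l - i) := by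
    apply mul_pos (by positivity)
    exact Finset.sum_pos (fun i _ => mul_pos (hCf q i) (hCg 0 (l - i))) hS
  refine ⟨(2:ℝ) ^ l * ∑ i ∈ Finset.range (l + 1), Cf q i * Cg 0 (l - i), hCpos,
    ε₀, ⟨hε₀pos, hε₀le⟩, ?_⟩
  intro ε hε x n hn
  have hεpos : 0 < ε := hε.1
  have hεle1 : ε ≤ 1 := le_trans hε.2.le hε₀le
  have hεmem : ∀ i ∈ Finset.range (l + 1), ε ∈ Ioo (0:ℝ) (εf q i) ∧
      ε ∈ Ioo (0:ℝ) (εg 0 (l - i)) := by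
    intro i hi
    have h1 : ε₀ ≤ min (εf q i) (εg 0 (l - i)) := Finset.inf'_le _ hi
    exact ⟨⟨hεpos, lt_of_lt_of_le hε.2 (h1.trans (min_le_left _ _))⟩,
      ⟨hεpos, lt_of_lt_of_le hε.2 (h1.trans (min_le_right _ _))⟩⟩
  have hwpos : (0:ℝ) < (1 + ‖x‖) ^ q := by positivity
  -- Leibniz rule
  have hmul : ‖iteratedFDeriv ℝ n (fun y => f ε y * g ε y) x‖ ≤
      ∑ i ∈ Finset.range (n + 1), (n.choose i : ℝ) * ‖iteratedFDeriv ℝ i (⇑(f ε)) x‖ *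
        ‖iteratedFDeriv ℝ (n - i) (⇑(g ε)) x‖ :=
    norm_iteratedFDeriv_mul_le ((f ε).smooth ⊤) ((g ε).smooth ⊤) x (mod_cast le_top)
  have key : ∀ i ∈ Finset.range (n + 1),
      (1 + ‖x‖) ^ q * ((n.choose i : ℝ) * ‖iteratedFDeriv ℝ i (⇑(f ε)) x‖ *
        ‖iteratedFDeriv ℝ (n - i) (⇑(g ε)) x‖) ≤
      (2:ℝ) ^ l * (Cf q i * Cg 0 (l - i)) * ε ^ (-(N₃ q l)) := by
    intro i hi
    have hil : i ≤ l := le_trans (Nat.lt_succ_iff.mp (Finset.mem_range.mp hi)) hn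
    have hiS : i ∈ Finset.range (l + 1) := Finset.mem_range.mpr (Nat.lt_succ_of_le hil)
    obtain ⟨hεfm, hεgm⟩ := hεmem i hiS
    have h1 : (1 + ‖x‖) ^ q * ‖iteratedFDeriv ℝ i (⇑(f ε)) x‖ ≤ Cf q i * ε ^ (-(Nf q i)) :=
      hff q i ε hεfm x i le_rfl
    have h2 : ‖iteratedFDeriv ℝ (n - i) (⇑(g ε)) x‖ ≤ Cg 0 (l - i) * ε ^ (-(Ng 0 (l - i))) := by
      have := hgg 0 (l - i) ε hεgm x (n - i) (Nat.sub_le_sub_right hn i)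
      simpa using this
    have hchooseN : n.choose i ≤ 2 ^ l := by
      calc n.choose i ≤ ∑ m ∈ Finset.range (n + 1), n.choose m :=
            Finset.single_le_sum (fun _ _ => Nat.zero_le _) hi
        _ = 2 ^ n := Nat.sum_range_choose n
        _ ≤ 2 ^ l := Nat.pow_le_pow_right (by norm_num) hn
    have hchoose : (n.choose i : ℝ) ≤ (2:ℝ) ^ l := by exact_mod_cast hchooseN
    have hexp : ε ^ (-(Nf q i)) * ε ^ (-(Ng 0 (l - i))) ≤ ε ^ (-(N₃ q l)) := by
      rw [← Real.rpow_add hεpos]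
      apply Real.rpow_le_rpow_of_exponent_ge hεpos hεle1
      have := hN₃ q 0 i (l - i)
      rw [Nat.add_zero, Nat.add_sub_cancel' hil] at this
      linarith
    calc (1 + ‖x‖) ^ q * ((n.choose i : ℝ) * ‖iteratedFDeriv ℝ i (⇑(f ε)) x‖ *
        ‖iteratedFDeriv ℝ (n - i) (⇑(g ε)) x‖)
        = (n.choose i : ℝ) * ((1 + ‖x‖) ^ q * ‖iteratedFDeriv ℝ i (⇑(f ε)) x‖) *
          ‖iteratedFDeriv ℝ (n - i) (⇑(g ε)) x‖ := by ring
      _ ≤ (2:ℝ) ^ l * (Cf q i * ε ^ (-(Nf q i))) * (Cg 0 (l - i) * ε ^ (-(Ng 0 (l - i)))) := by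
          have hεr : (0:ℝ) < ε ^ (-(Nf q i)) := Real.rpow_pos_of_pos hεpos _
          apply mul_le_mul _ h2 (norm_nonneg _)
            (mul_nonneg (by positivity) (mul_pos (hCf q i) hεr).le)
          apply mul_le_mul hchoose h1 (mul_nonneg hwpos.le (norm_nonneg _)) (by positivity)
      _ = (2:ℝ) ^ l * (Cf q i * Cg 0 (l - i)) * (ε ^ (-(Nf q i)) * ε ^ (-(Ng 0 (l - i)))) := by
          ring
      _ ≤ (2:ℝ) ^ l * (Cf q i * Cg 0 (l - i)) * ε ^ (-(N₃ q l)) := by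
          apply mul_le_mul_of_nonneg_left hexp
          exact mul_nonneg (by positivity) (mul_pos (hCf q i) (hCg 0 (l - i))).le
  calc (1 + ‖x‖) ^ q * ‖iteratedFDeriv ℝ n (fun y => f ε y * g ε y) x‖
      ≤ (1 + ‖x‖) ^ q * ∑ i ∈ Finset.range (n + 1),
          (n.choose i : ℝ) * ‖iteratedFDeriv ℝ i (⇑(f ε)) x‖ *
          ‖iteratedFDeriv ℝ (n - i) (⇑(g ε)) x‖ := by
        exact mul_le_mul_of_nonneg_left hmul hwpos.le
    _ = ∑ i ∈ Finset.range (n + 1), (1 + ‖x‖) ^ q *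
          ((n.choose i : ℝ) * ‖iteratedFDeriv ℝ i (⇑(f ε)) x‖ *
          ‖iteratedFDeriv ℝ (n - i) (⇑(g ε)) x‖) := Finset.mul_sum _ _ _
    _ ≤ ∑ i ∈ Finset.range (n + 1),
          (2:ℝ) ^ l * (Cf q i * Cg 0 (l - i)) * ε ^ (-(N₃ q l)) :=
        Finset.sum_le_sum key
    _ ≤ ∑ i ∈ Finset.range (l + 1),
          (2:ℝ) ^ l * (Cf q i * Cg 0 (l - i)) * ε ^ (-(N₃ q l)) := by
        apply Finset.sum_le_sum_of_subset_of_nonneg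
        · exact Finset.range_subset_range.mpr (by omega)
        · intro i _ _
          exact mul_nonneg (mul_nonneg (by positivity) (mul_pos (hCf q i) (hCg 0 (l - i))).le)
            (Real.rpow_pos_of_pos hεpos _).le
    _ = (2:ℝ) ^ l * (∑ i ∈ Finset.range (l + 1), Cf q i * Cg 0 (l - i)) * ε ^ (-(N₃ q l)) := by
        rw [← Finset.sum_mul, ← Finset.mul_sum]
end

section
/- Let (f_ε)_{ε∈(0,1]} be a net of Schwartz functions on ℝ^d such that (a) for every (q,l) ∈ ℕ² there exists a ∈ ℕ with μ_{q,l}(f_ε) = O(ε^{-a}) as ε→0, and (b) for every q ∈ ℕ and every m ∈ ℕ, μ_{q,0}(f_ε) = O(ε^m) as ε→0. Then for every (q,l) ∈ ℕ² and every m ∈ ℕ, μ_{q,l}(f_ε) = O(ε^m) as ε→0. -/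
/-!
Landau–Kolmogorov interpolation: if `‖F‖ ≤ A` on the closed ball of radius `h` about `x` and the
derivative `F'` varies by at most `M` there, the first-order Taylor formula at `x + h • u`
(`‖u‖ = 1`) gives `‖F' x‖ ≤ 2 A / h + M`. The weight `(1 + ‖y‖) ^ q` changes by a factor at most
`2 ^ q` on unit balls, so for `F = D^l f_ε`, with `M` bounded by the mean value theorem,
`μ_{q,l+1} ≤ 2 ^ q (2 μ_{q,l} / h + μ_{q,l+2} h)` for every `h ∈ (0, 1]`. Now argue by induction
on `l`: if `μ_{q,l} = O(ε^(2m+a))` and the moderate bound `μ_{q,l+2} = O(ε^(-a))` holds, the choice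
`h = ε^(m+a)` gives `μ_{q,l+1} = O(ε^m)`.
-/

open Set Metric

section Weights

variable {E G : Type*} [SeminormedAddCommGroup E] [SeminormedAddCommGroup G]

theorem one_add_norm_le_two_mul_one_add_norm {x y : E} (hxy : ‖y - x‖ ≤ 1) :
    1 + ‖x‖ ≤ 2 * (1 + ‖y‖) := by
  linarith [norm_sub_norm_le x y, norm_sub_rev x y, norm_nonneg y]

theorem norm_le_of_forall_one_add_norm_pow_mul_le {D : E → G} {q : ℕ} {K : ℝ}
    (hK : ∀ y, (1 + ‖y‖) ^ q * ‖D y‖ ≤ K) {x y : E} (hxy : ‖y - x‖ ≤ 1) :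
    ‖D y‖ ≤ 2 ^ q * K / (1 + ‖x‖) ^ q := by
  rw [le_div_iff₀ (by positivity)]
  calc ‖D y‖ * (1 + ‖x‖) ^ q ≤ ‖D y‖ * (2 * (1 + ‖y‖)) ^ q := by
        gcongr; exact one_add_norm_le_two_mul_one_add_norm hxy
    _ = 2 ^ q * ((1 + ‖y‖) ^ q * ‖D y‖) := by rw [mul_pow]; ring
    _ ≤ 2 ^ q * K := by gcongr; exact hK y

end Weights

section Interpolation

variable {E G : Type*} [NormedAddCommGroup E] [NormedSpace ℝ E]
  [NormedAddCommGroup G] [NormedSpace ℝ G]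

theorem norm_le_two_mul_div_add_of_hasFDerivAt {F : E → G} {F' : E → E →L[ℝ] G} {x : E}
    {h A M : ℝ} (hh : 0 < h) (hF : ∀ y ∈ closedBall x h, HasFDerivAt F (F' y) y)
    (hA : ∀ y ∈ closedBall x h, ‖F y‖ ≤ A) (hM : ∀ y ∈ closedBall x h, ‖F' y - F' x‖ ≤ M) :
    ‖F' x‖ ≤ 2 * A / h + M := by
  have hx : x ∈ closedBall x h := mem_closedBall_self hh.le
  have hA₀ : 0 ≤ A := (norm_nonneg _).trans (hA x hx)
  have hM₀ : 0 ≤ M := (norm_nonneg _).trans (hM x hx)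
  refine ContinuousLinearMap.opNorm_le_of_unit_norm (by positivity) fun u hu => ?_
  set y := x + h • u
  have hy : y ∈ closedBall x h := by simp [y, norm_smul, hu, abs_of_pos hh]
  have hyx : y - x = h • u := add_sub_cancel_left x _
  have htaylor : ‖F y - F x - F' x (y - x)‖ ≤ M * ‖y - x‖ :=
    (convex_closedBall x h).norm_image_sub_le_of_norm_hasFDerivWithin_le'
      (fun z hz => (hF z hz).hasFDerivWithinAt) hM hx hy
  rw [hyx, map_smul, norm_smul, hu, Real.norm_of_nonneg hh.le, mul_one] at htaylor
  have key : h * ‖F' x u‖ ≤ 2 * A + M * h :=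
    calc h * ‖F' x u‖ = ‖(F y - F x) - (F y - F x - h • F' x u)‖ := by
          rw [sub_sub_cancel, norm_smul, Real.norm_of_nonneg hh.le]
      _ ≤ ‖F y‖ + ‖F x‖ + ‖F y - F x - h • F' x u‖ :=
          (norm_sub_le _ _).trans (by gcongr; exact norm_sub_le _ _)
      _ ≤ A + A + M * h := by gcongr; exacts [hA y hy, hA x hx]
      _ = 2 * A + M * h := by ring
  rw [div_add' _ _ _ hh.ne', le_div_iff₀ hh]
  linarith

theorem norm_fderiv_iteratedFDeriv_sub {g : E → G} {n : ℕ} {x y : E} :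
    ‖fderiv ℝ (iteratedFDeriv ℝ n g) y - fderiv ℝ (iteratedFDeriv ℝ n g) x‖ =
      ‖iteratedFDeriv ℝ (n + 1) g y - iteratedFDeriv ℝ (n + 1) g x‖ := by
  rw [fderiv_iteratedFDeriv]
  simpa only [Function.comp_apply, dist_eq_norm] using
    (continuousMultilinearCurryLeftEquiv ℝ (fun _ : Fin (n + 1) => E) G).dist_map _ _

theorem one_add_norm_pow_mul_norm_iteratedFDeriv_succ_le {g : E → G} {q n : ℕ}
    (hg : ContDiff ℝ (n + 2) g) {h K₀ K₂ : ℝ} (hh₀ : 0 < h) (hh₁ : h ≤ 1)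
    (hK₀ : ∀ y, (1 + ‖y‖) ^ q * ‖iteratedFDeriv ℝ n g y‖ ≤ K₀)
    (hK₂ : ∀ y, (1 + ‖y‖) ^ q * ‖iteratedFDeriv ℝ (n + 2) g y‖ ≤ K₂) (x : E) :
    (1 + ‖x‖) ^ q * ‖iteratedFDeriv ℝ (n + 1) g x‖ ≤ 2 ^ q * (2 * K₀ / h + K₂ * h) := by
  set w := (1 + ‖x‖) ^ q
  have hw : 0 < w := by positivity
  have hK₂₀ : 0 ≤ K₂ := (by positivity : (0:ℝ) ≤ w * ‖iteratedFDeriv ℝ (n + 2) g x‖).trans (hK₂ x)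
  have hx : x ∈ closedBall x h := mem_closedBall_self hh₀.le
  have hnear : ∀ y ∈ closedBall x h, ‖y - x‖ ≤ 1 := fun y hy =>
    (mem_closedBall_iff_norm.mp hy).trans hh₁
  have hdiff : Differentiable ℝ (iteratedFDeriv ℝ n g) :=
    (hg.iteratedFDeriv_right (m := 1) (by norm_cast; omega)).differentiable one_ne_zero
  have hdiff' : Differentiable ℝ (iteratedFDeriv ℝ (n + 1) g) :=
    (hg.iteratedFDeriv_right (m := 1) (le_of_eq (by push_cast; ring))).differentiable one_ne_zero
  have hosc : ∀ y ∈ closedBall x h, ‖fderiv ℝ (iteratedFDeriv ℝ n g) y -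
      fderiv ℝ (iteratedFDeriv ℝ n g) x‖ ≤ 2 ^ q * K₂ / w * h := fun y hy => by
    have hbound : ∀ z ∈ closedBall x h,
        ‖fderiv ℝ (iteratedFDeriv ℝ (n + 1) g) z‖ ≤ 2 ^ q * K₂ / w := fun z hz => by
      rw [norm_fderiv_iteratedFDeriv]
      exact norm_le_of_forall_one_add_norm_pow_mul_le hK₂ (hnear z hz)
    rw [norm_fderiv_iteratedFDeriv_sub]
    calc _ ≤ 2 ^ q * K₂ / w * ‖y - x‖ :=
          (convex_closedBall x h).norm_image_sub_le_of_norm_fderiv_le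
            (fun z _ => hdiff' z) hbound hx hy
      _ ≤ 2 ^ q * K₂ / w * h := by gcongr; exact mem_closedBall_iff_norm.mp hy
  have key := norm_le_two_mul_div_add_of_hasFDerivAt hh₀ (fun y _ => (hdiff y).hasFDerivAt)
    (fun y hy => norm_le_of_forall_one_add_norm_pow_mul_le hK₀ (hnear y hy)) hosc
  rw [norm_fderiv_iteratedFDeriv] at key
  calc w * ‖iteratedFDeriv ℝ (n + 1) g x‖
      ≤ w * (2 * (2 ^ q * K₀ / w) / h + 2 ^ q * K₂ / w * h) := by gcongr
    _ = 2 ^ q * (2 * K₀ / h + K₂ * h) := by field_simp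

-- The choice `h = ε ^ (m + a)` balances the two terms of the interpolation inequality.
theorem one_add_norm_pow_mul_norm_iteratedFDeriv_succ_le_rpow {g : E → G} {q n : ℕ}
    (hg : ContDiff ℝ (n + 2) g) {ε a m C₀ C₂ : ℝ} (hε₀ : 0 < ε) (hε₁ : ε ≤ 1) (hma : 0 ≤ m + a)
    (hC₀ : ∀ y, (1 + ‖y‖) ^ q * ‖iteratedFDeriv ℝ n g y‖ ≤ C₀ * ε ^ (2 * m + a))
    (hC₂ : ∀ y, (1 + ‖y‖) ^ q * ‖iteratedFDeriv ℝ (n + 2) g y‖ ≤ C₂ * ε ^ (-a)) (x : E) :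
    (1 + ‖x‖) ^ q * ‖iteratedFDeriv ℝ (n + 1) g x‖ ≤ 2 ^ q * (2 * C₀ + C₂) * ε ^ m := by
  have hh₀ : 0 < ε ^ (m + a) := Real.rpow_pos_of_pos hε₀ _
  have h₀ : ε ^ (2 * m + a) = ε ^ m * ε ^ (m + a) := by
    rw [← Real.rpow_add hε₀]; ring_nf
  have h₂ : ε ^ (-a) * ε ^ (m + a) = ε ^ m := by
    rw [← Real.rpow_add hε₀]; ring_nf
  calc (1 + ‖x‖) ^ q * ‖iteratedFDeriv ℝ (n + 1) g x‖
      ≤ 2 ^ q * (2 * (C₀ * ε ^ (2 * m + a)) / ε ^ (m + a) + C₂ * ε ^ (-a) * ε ^ (m + a)) :=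
        one_add_norm_pow_mul_norm_iteratedFDeriv_succ_le hg hh₀
          (Real.rpow_le_one hε₀.le hε₁ hma) hC₀ hC₂ x
    _ = 2 ^ q * (2 * C₀ + C₂) * ε ^ m := by
        rw [h₀, mul_assoc C₂, h₂]; field_simp

/-- `μ_{q,l}(f ε) = O(ε ^ r)` as `ε → 0`. -/
def IsBigOSeminorm (f : ℝ → E → G) (q l : ℕ) (r : ℝ) : Prop :=
  ∃ C > (0:ℝ), ∃ ε₀ ∈ Ioc (0:ℝ) 1, ∀ ε ∈ Ioo (0:ℝ) ε₀,
    ∀ x, ∀ n ≤ l, (1 + ‖x‖) ^ q * ‖iteratedFDeriv ℝ n (f ε) x‖ ≤ C * ε ^ r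

theorem isBigOSeminorm_zero {f : ℝ → E → G} {q : ℕ} {r : ℝ}
    (hf : ∃ C > (0:ℝ), ∃ ε₀ ∈ Ioc (0:ℝ) 1, ∀ ε ∈ Ioo (0:ℝ) ε₀,
      ∀ x, (1 + ‖x‖) ^ q * ‖f ε x‖ ≤ C * ε ^ r) :
    IsBigOSeminorm f q 0 r := by
  obtain ⟨C, hC, ε₀, hε₀, H⟩ := hf
  refine ⟨C, hC, ε₀, hε₀, fun ε hε x n hn => ?_⟩
  rw [Nat.le_zero.mp hn, norm_iteratedFDeriv_zero]
  exact H ε hε x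

theorem IsBigOSeminorm.succ {f : ℝ → E → G} {q l a : ℕ}
    (hf : ∀ ε, ContDiff ℝ (l + 2) (f ε)) (hl : ∀ m : ℕ, IsBigOSeminorm f q l m)
    (ha : IsBigOSeminorm f q (l + 2) (-a)) (m : ℕ) : IsBigOSeminorm f q (l + 1) m := by
  obtain ⟨C₀, hC₀, ε₁, hε₁, H₀⟩ := hl (2 * m + a)
  obtain ⟨C₂, hC₂, ε₂, hε₂, H₂⟩ := ha
  refine ⟨2 ^ q * (2 * C₀ + C₂) + C₀, by positivity, min ε₁ ε₂,
    ⟨lt_min hε₁.1 hε₂.1, (min_le_left _ _).trans hε₁.2⟩, fun ε hε x n hn => ?_⟩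
  have hε₁' : ε ∈ Ioo 0 ε₁ := ⟨hε.1, hε.2.trans_le (min_le_left _ _)⟩
  have hε₂' : ε ∈ Ioo 0 ε₂ := ⟨hε.1, hε.2.trans_le (min_le_right _ _)⟩
  have hε1 : ε ≤ 1 := hε₁'.2.le.trans hε₁.2
  have hεm : 0 ≤ ε ^ (m : ℝ) := Real.rpow_nonneg hε.1.le _
  rcases Nat.le_succ_iff.mp hn with hn | rfl
  · calc (1 + ‖x‖) ^ q * ‖iteratedFDeriv ℝ n (f ε) x‖ ≤ C₀ * ε ^ ((2 * m + a : ℕ) : ℝ) :=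
          H₀ ε hε₁' x n hn
      _ ≤ C₀ * ε ^ (m : ℝ) := mul_le_mul_of_nonneg_left
          (Real.rpow_le_rpow_of_exponent_ge hε.1 hε1 (by push_cast; linarith)) hC₀.le
      _ ≤ _ := by gcongr; exact le_add_of_nonneg_left (by positivity)
  · calc (1 + ‖x‖) ^ q * ‖iteratedFDeriv ℝ (l + 1) (f ε) x‖
        ≤ 2 ^ q * (2 * C₀ + C₂) * ε ^ (m : ℝ) :=
          one_add_norm_pow_mul_norm_iteratedFDeriv_succ_le_rpow (hf ε) hε.1 hε1 (by positivity)
            (fun y => by simpa using H₀ ε hε₁' y l le_rfl) (fun y => H₂ ε hε₂' y _ le_rfl) x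
      _ ≤ _ := by gcongr; exact le_add_of_nonneg_right hC₀.le

end Interpolation

/-- A moderate net of Schwartz functions whose 0-order seminorms `μ_{q,0}` are negligible
is negligible for all seminorms `μ_{q,l}`. -/
theorem stmt4 (d : ℕ) (f : ℝ → SchwartzMap (EuclideanSpace ℝ (Fin d)) ℂ)
    (ha : ∀ q l : ℕ, ∃ a : ℕ, ∃ C > (0:ℝ), ∃ ε₀ ∈ Ioc (0:ℝ) 1, ∀ ε ∈ Ioo (0:ℝ) ε₀,
      ∀ x, ∀ n ≤ l, (1 + ‖x‖) ^ q * ‖iteratedFDeriv ℝ n (⇑(f ε)) x‖ ≤ C * ε ^ (-(a : ℝ)))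
    (hb : ∀ q m : ℕ, ∃ C > (0:ℝ), ∃ ε₀ ∈ Ioc (0:ℝ) 1, ∀ ε ∈ Ioo (0:ℝ) ε₀,
      ∀ x, (1 + ‖x‖) ^ q * ‖f ε x‖ ≤ C * ε ^ (m : ℝ)) :
    ∀ q l m : ℕ, ∃ C > (0:ℝ), ∃ ε₀ ∈ Ioc (0:ℝ) 1, ∀ ε ∈ Ioo (0:ℝ) ε₀,
      ∀ x, ∀ n ≤ l, (1 + ‖x‖) ^ q * ‖iteratedFDeriv ℝ n (⇑(f ε)) x‖ ≤ C * ε ^ (m : ℝ) := by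
  intro q l
  induction l with
  | zero => exact fun m => isBigOSeminorm_zero (hb q m)
  | succ l ih =>
    obtain ⟨a, hmoderate⟩ := ha q (l + 2)
    exact IsBigOSeminorm.succ (fun ε => (f ε).smooth _) ih hmoderate
end

section
/- Let q ∈ ℕ and let f : ℝ^d → ℂ be continuous with (1+|x|)^q |f(x)| ≤ C₁ for all x ∈ ℝ^d and some constant C₁ > 0. Let ρ ∈ 𝒮(ℝ^d) and let α be a multi-index. Then there exists a constant C > 0 such that for all ε ∈ (0,1] and all x ∈ ℝ^d, (1+|x|)^q | ∫_{ℝ^d} f(x−y) (∂^α ρ_ε)(y) dy | ≤ C ε^{-|α|}. -/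
/-!
Differentiating the dilation `ρ_ε` pulls out a factor `ε^{-|α|}` and leaves `∂^α ρ` dilated
by `ε`. The weight is then moved onto the two factors by `1 + |x| ≤ (1 + |x - y|)(1 + |y|)` and
`|y| ≤ |y / ε|` for `ε ≤ 1`, so that `(1 + |·|)^q |f|` is bounded and `(1 + |·|)^q |∂^α ρ|`
is integrable; the substitution `y ↦ y / ε` absorbs the normalisation `ε^{-d}`.
-/

open Set MeasureTheory

/-- The partial derivative of `f` in the `i`-th coordinate direction. -/
noncomputable def coordPDeriv (d : ℕ) (i : Fin d) (f : EuclideanSpace ℝ (Fin d) → ℂ) :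
    EuclideanSpace ℝ (Fin d) → ℂ :=
  fun x => fderiv ℝ f x (EuclideanSpace.single i 1)

/-- The multi-index partial derivative `∂^α f`, where the multi-index `α` is encoded
as the list of coordinate directions in which one differentiates (so `|α| = α.length`). -/
noncomputable def multiPDeriv (d : ℕ) (α : List (Fin d)) (f : EuclideanSpace ℝ (Fin d) → ℂ) :
    EuclideanSpace ℝ (Fin d) → ℂ :=
  α.foldr (coordPDeriv d) f

open scoped SchwartzMap

namespace SchwartzMap

variable {D V : Type*} [NormedAddCommGroup D] [NormedSpace ℝ D] [MeasurableSpace D] [BorelSpace D]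
  [SecondCountableTopology D] [NormedAddCommGroup V] [NormedSpace ℝ V]

lemma integrable_one_add_norm_pow_mul (μ : Measure D) [μ.HasTemperateGrowth] (g : 𝓢(D, V))
    (k : ℕ) : Integrable (fun x => (1 + ‖x‖) ^ k * ‖g x‖) μ := by
  have binomial : (fun x => (1 + ‖x‖) ^ k * ‖g x‖) =
      fun x => ∑ i ∈ Finset.range (k + 1), (k.choose i : ℝ) * (‖x‖ ^ i * ‖g x‖) := by
    funext x
    rw [add_comm, add_pow, Finset.sum_mul]
    refine Finset.sum_congr rfl fun i _ => ?_
    ring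
  rw [binomial]
  exact integrable_finsetSum _ fun i _ => (g.integrable_pow_mul μ i).const_mul _

end SchwartzMap

section MultiPDeriv

variable {d : ℕ}

noncomputable def schwartzMultiPDeriv (α : List (Fin d))
    (g : 𝓢(EuclideanSpace ℝ (Fin d), ℂ)) : 𝓢(EuclideanSpace ℝ (Fin d), ℂ) :=
  α.foldr (fun i h => LineDeriv.lineDerivOp (EuclideanSpace.single i (1 : ℝ)) h) g

lemma coe_schwartzMultiPDeriv (α : List (Fin d)) (g : 𝓢(EuclideanSpace ℝ (Fin d), ℂ)) :
    ⇑(schwartzMultiPDeriv α g) = multiPDeriv d α g := by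
  induction α with
  | nil => rfl
  | cons i α ih =>
    funext x
    change fderiv ℝ (schwartzMultiPDeriv α g) x _ = fderiv ℝ (multiPDeriv d α g) x _
    rw [ih]

lemma coordPDeriv_const_mul_comp_smul {h : EuclideanSpace ℝ (Fin d) → ℂ}
    (hh : Differentiable ℝ h) (c : ℂ) (a : ℝ) (i : Fin d) :
    coordPDeriv d i (fun y => c * h (a • y)) = fun y => c * a * coordPDeriv d i h (a • y) := by
  funext y
  have hscale : HasFDerivAt (fun y => c * h (a • y))
      (c • (fderiv ℝ h (a • y)).comp (a • ContinuousLinearMap.id ℝ _)) y :=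
    ((hh (a • y)).hasFDerivAt.comp y ((hasFDerivAt_id y).const_smul a)).const_mul c
  rw [coordPDeriv, hscale.fderiv, coordPDeriv]
  simp only [ContinuousLinearMap.comp_smulₛₗ, Real.ringHom_apply, ContinuousLinearMap.comp_id,
    smul_apply, Complex.real_smul, smul_eq_mul]
  ring

lemma multiPDeriv_const_mul_comp_smul (α : List (Fin d)) (g : 𝓢(EuclideanSpace ℝ (Fin d), ℂ))
    (c : ℂ) (a : ℝ) :
    multiPDeriv d α (fun z => c * g (a • z)) =
      fun y => c * a ^ α.length * schwartzMultiPDeriv α g (a • y) := by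
  induction α with
  | nil => simp [multiPDeriv, schwartzMultiPDeriv]
  | cons i α ih =>
    change coordPDeriv d i (multiPDeriv d α _) = _
    rw [ih, coordPDeriv_const_mul_comp_smul (SchwartzMap.differentiable _)]
    funext y
    rw [List.length_cons, pow_succ, ← mul_assoc]
    rfl

end MultiPDeriv

lemma one_add_norm_le_mul_one_add_norm_sub {E : Type*} [SeminormedAddCommGroup E] (x y : E) :
    1 + ‖x‖ ≤ (1 + ‖x - y‖) * (1 + ‖y‖) := by
  nlinarith [norm_le_norm_sub_add x y, mul_nonneg (norm_nonneg (x - y)) (norm_nonneg y)]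

section WeightedConvolution

variable {E 𝕜 : Type*} [NormedAddCommGroup E] [NormedSpace ℝ E] [FiniteDimensional ℝ E]
  [MeasurableSpace E] [BorelSpace E] {μ : Measure E} [μ.IsAddHaarMeasure] [RCLike 𝕜]

lemma one_add_norm_pow_mul_norm_integral_le {f g : E → 𝕜} {q : ℕ} {C₁ : ℝ}
    (hf : ∀ x, (1 + ‖x‖) ^ q * ‖f x‖ ≤ C₁)
    (hg : Integrable (fun z => (1 + ‖z‖) ^ q * ‖g z‖) μ) {ε : ℝ} (hε : ε ∈ Ioc 0 1) (x : E) :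
    (1 + ‖x‖) ^ q * ‖∫ y, f (x - y) * g (ε⁻¹ • y) ∂μ‖ ≤
      C₁ * ε ^ Module.finrank ℝ E * ∫ z, (1 + ‖z‖) ^ q * ‖g z‖ ∂μ := by
  set W : E → ℝ := fun z => (1 + ‖z‖) ^ q * ‖g z‖
  have pointwise : ∀ y, (1 + ‖x‖) ^ q * ‖f (x - y) * g (ε⁻¹ • y)‖ ≤ C₁ * W (ε⁻¹ • y) := by
    intro y
    have hy : ‖y‖ ≤ ‖ε⁻¹ • y‖ := by
      rw [norm_smul, Real.norm_of_nonneg (inv_nonneg.2 hε.1.le)]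
      exact le_mul_of_one_le_left (norm_nonneg y) ((one_le_inv₀ hε.1).2 hε.2)
    have weight : (1 + ‖x‖) ^ q ≤ (1 + ‖x - y‖) ^ q * (1 + ‖ε⁻¹ • y‖) ^ q := by
      rw [← mul_pow]
      gcongr
      exact (one_add_norm_le_mul_one_add_norm_sub x y).trans (by gcongr)
    calc (1 + ‖x‖) ^ q * ‖f (x - y) * g (ε⁻¹ • y)‖
        ≤ (1 + ‖x - y‖) ^ q * (1 + ‖ε⁻¹ • y‖) ^ q * (‖f (x - y)‖ * ‖g (ε⁻¹ • y)‖) := by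
          rw [norm_mul]; gcongr
      _ = (1 + ‖x - y‖) ^ q * ‖f (x - y)‖ * W (ε⁻¹ • y) := by ring
      _ ≤ C₁ * W (ε⁻¹ • y) := by gcongr; exact hf _
  calc (1 + ‖x‖) ^ q * ‖∫ y, f (x - y) * g (ε⁻¹ • y) ∂μ‖
      ≤ (1 + ‖x‖) ^ q * ∫ y, ‖f (x - y) * g (ε⁻¹ • y)‖ ∂μ := by
        gcongr; exact norm_integral_le_integral_norm _
    _ = ∫ y, (1 + ‖x‖) ^ q * ‖f (x - y) * g (ε⁻¹ • y)‖ ∂μ := (integral_const_mul _ _).symm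
    _ ≤ ∫ y, C₁ * W (ε⁻¹ • y) ∂μ :=
        integral_mono_of_nonneg (.of_forall fun y => by positivity)
          ((hg.comp_smul (inv_ne_zero hε.1.ne')).const_mul C₁) (.of_forall pointwise)
    _ = C₁ * ε ^ Module.finrank ℝ E * ∫ z, W z ∂μ := by
        rw [integral_const_mul, Measure.integral_comp_inv_smul_of_nonneg μ W hε.1.le, smul_eq_mul,
          mul_assoc]

end WeightedConvolution

theorem stmt5_general (d q : ℕ) (f : EuclideanSpace ℝ (Fin d) → ℂ)
    (C₁ : ℝ)
    (hf_bd : ∀ x, (1 + ‖x‖) ^ q * ‖f x‖ ≤ C₁)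
    (ρ : SchwartzMap (EuclideanSpace ℝ (Fin d)) ℂ) (α : List (Fin d)) :
    ∃ C > (0:ℝ), ∀ ε ∈ Ioc (0:ℝ) 1, ∀ x,
      (1 + ‖x‖) ^ q *
        ‖∫ y, f (x - y) * multiPDeriv d α (fun z => (((ε ^ d)⁻¹ : ℝ) : ℂ) * ρ (ε⁻¹ • z)) y‖
        ≤ C * ε ^ (-(α.length : ℝ)) := by
  set G := schwartzMultiPDeriv α ρ
  set I := ∫ z, (1 + ‖z‖) ^ q * ‖G z‖
  have hC₁ : 0 ≤ C₁ := le_trans (by positivity) (hf_bd 0)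
  have hI : 0 ≤ I := integral_nonneg fun z => by positivity
  refine ⟨C₁ * I + 1, by positivity, fun ε hε x => ?_⟩
  have hbound := one_add_norm_pow_mul_norm_integral_le hf_bd
    (G.integrable_one_add_norm_pow_mul volume q) hε x
  rw [finrank_euclideanSpace_fin] at hbound
  simp_rw [multiPDeriv_const_mul_comp_smul, mul_left_comm (f _), integral_const_mul, norm_mul,
    mul_left_comm _ (‖_‖ * ‖_‖)]
  have hε0 : 0 < ε := hε.1
  rw [Complex.norm_real, norm_pow, Complex.norm_real, Real.norm_of_nonneg (by positivity),
    Real.norm_of_nonneg (by positivity), Real.rpow_neg hε0.le, Real.rpow_natCast]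
  calc (ε ^ d)⁻¹ * ε⁻¹ ^ α.length * ((1 + ‖x‖) ^ q * ‖∫ y, f (x - y) * G (ε⁻¹ • y)‖)
      ≤ (ε ^ d)⁻¹ * ε⁻¹ ^ α.length * (C₁ * ε ^ d * I) := by gcongr
    _ = C₁ * I * (ε ^ α.length)⁻¹ := by rw [inv_pow]; field_simp
    _ ≤ (C₁ * I + 1) * (ε ^ α.length)⁻¹ := by gcongr; linarith

/-- For `f` continuous with `(1+|x|)^q |f(x)| ≤ C₁` and `ρ` Schwartz,
`(1+|x|)^q |(f ∗ ∂^α ρ_ε)(x)| ≤ C ε^{-|α|}` uniformly in `ε ∈ (0,1]` and `x`. -/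
theorem stmt5 (d q : ℕ) (f : EuclideanSpace ℝ (Fin d) → ℂ) (hf_cont : Continuous f)
    (C₁ : ℝ) (hC₁ : 0 < C₁)
    (hf_bd : ∀ x, (1 + ‖x‖) ^ q * ‖f x‖ ≤ C₁)
    (ρ : SchwartzMap (EuclideanSpace ℝ (Fin d)) ℂ) (α : List (Fin d)) :
    ∃ C > (0:ℝ), ∀ ε ∈ Ioc (0:ℝ) 1, ∀ x,
      (1 + ‖x‖) ^ q *
        ‖∫ y, f (x - y) * multiPDeriv d α (fun z => (((ε ^ d)⁻¹ : ℝ) : ℂ) * ρ (ε⁻¹ • z)) y‖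
        ≤ C * ε ^ (-(α.length : ℝ)) :=
  stmt5_general d q f C₁ hf_bd ρ α
end

section
/- Let R be a regular set of sequences and let (u_ε)_{ε∈(0,1]} be a net of Schwartz functions on ℝ^d for which there exists N ∈ R with μ_{q,l}(u_ε) = O(ε^{-N(l)}) as ε→0 for all (q,l) ∈ ℕ² (a bound depending only on the derivative index l). Then there exists N' ∈ R such that μ_{q,l}(û_ε) = O(ε^{-N'(q)}) as ε→0 for all (q,l) ∈ ℕ² (a bound depending only on the weight index q). -/
open Set MeasureTheory

/-- The Fourier transform `û(ξ) = ∫ e^{-i x·ξ} u(x) dx` on `ℝ^d`. -/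
noncomputable def ftransform (d : ℕ) (u : EuclideanSpace ℝ (Fin d) → ℂ) :
    EuclideanSpace ℝ (Fin d) → ℂ :=
  fun ξ => ∫ x, Complex.exp (-(Complex.I * ((inner ℝ x ξ : ℝ) : ℂ))) * u x

/-!
Derivatives of `û` are Fourier transforms of polynomially weighted `u`, and polynomial weights
on `û` are Fourier transforms of derivatives of `u` (`Real.pow_mul_norm_iteratedFDeriv_fourier_le`).
So the weighted bound of order `(q, l)` for `û` only involves derivatives of `u` of order `≤ q`,
integrated against weights of order `≤ l`; integrability costs a fixed number of further weights.
Since the bounds on `u` are uniform in the weight, they carry the exponent `N q`,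
and `N' = N` works.
-/

open Real
open scoped FourierTransform SchwartzMap

section TemperateGrowth

variable {E F : Type*} [NormedAddCommGroup E] [MeasurableSpace E] [NormedAddCommGroup F]
  (μ : Measure E) [μ.HasTemperateGrowth]

lemma integral_pow_mul_norm_le_of_one_add_pow_mul_le {g : E → F} {a K : ℕ} {M : ℝ}
    (hK : a + μ.integrablePower ≤ K) (hg : ∀ x, (1 + ‖x‖) ^ K * ‖g x‖ ≤ M) :
    ∫ x, ‖x‖ ^ a * ‖g x‖ ∂μ ≤
      2 * 2 ^ μ.integrablePower * (∫ x, (1 + ‖x‖) ^ (-(μ.integrablePower : ℝ)) ∂μ) * M := by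
  have hbound : ∀ x, ‖g x‖ ≤ M := fun x =>
    (le_mul_of_one_le_left (norm_nonneg _) (one_le_pow₀ (by simp))).trans (hg x)
  have hmoment : ∀ x, ‖x‖ ^ (a + μ.integrablePower) * ‖g x‖ ≤ M := fun x => by
    refine le_trans ?_ (hg x)
    gcongr
    calc ‖x‖ ^ (a + μ.integrablePower) ≤ (1 + ‖x‖) ^ (a + μ.integrablePower) := by
          gcongr; linarith
      _ ≤ (1 + ‖x‖) ^ K := pow_le_pow_right₀ (by simp) hK
  calc ∫ x, ‖x‖ ^ a * ‖g x‖ ∂μ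
      ≤ 2 ^ μ.integrablePower * (∫ x, (1 + ‖x‖) ^ (-(μ.integrablePower : ℝ)) ∂μ) * (M + M) :=
        integral_pow_mul_le_of_le_of_pow_mul_le hbound hmoment
    _ = _ := by ring

lemma integral_one_add_norm_rpow_neg_integrablePower_pos [NeZero μ] :
    0 < ∫ x, (1 + ‖x‖) ^ (-(μ.integrablePower : ℝ)) ∂μ := by
  have hpos : ∀ x : E, 0 < (1 + ‖x‖) ^ (-(μ.integrablePower : ℝ)) := fun x =>
    Real.rpow_pos_of_pos (by positivity) _
  rw [integral_pos_iff_support_of_nonneg (fun x => (hpos x).le)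
    (μ.integrable_pow_neg_integrablePower), Function.support_eq_univ fun x => (hpos x).ne']
  exact Measure.measure_univ_pos.2 (NeZero.ne μ)

end TemperateGrowth

section Fourier

variable {V E : Type*} [NormedAddCommGroup V] [InnerProductSpace ℝ V] [FiniteDimensional ℝ V]
  [MeasurableSpace V] [BorelSpace V] [NormedAddCommGroup E] [NormedSpace ℂ E]

lemma one_add_pow_mul_norm_iteratedFDeriv_fourier_le (f : 𝓢(V, E)) {q l n : ℕ} {M : ℝ}
    (hM : ∀ a ≤ l, ∀ b ≤ q, ∫ v, ‖v‖ ^ a * ‖iteratedFDeriv ℝ b f v‖ ≤ M) (hn : n ≤ l) (w : V) :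
    (1 + ‖w‖) ^ q * ‖iteratedFDeriv ℝ n (𝓕 ⇑f) w‖ ≤
      2 ^ (q + 1) * ((2 * π) ^ l * (2 * l + 2) ^ q * ((l + 1) * (q + 1) * M)) := by
  set B := (2 * π) ^ l * (2 * (l : ℝ) + 2) ^ q * ((l + 1) * (q + 1) * M) with hB
  have hM0 : 0 ≤ M :=
    (integral_nonneg fun v => by positivity).trans (hM 0 (Nat.zero_le _) 0 (Nat.zero_le _))
  have hmoment : ∀ m ≤ q, ‖w‖ ^ m * ‖iteratedFDeriv ℝ n (𝓕 ⇑f) w‖ ≤ B := by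
    intro m hm
    grw [pow_mul_norm_iteratedFDeriv_fourier_le (K := ⊤) (N := ⊤) (f.smooth ⊤)
      (fun k n _ _ => f.integrable_pow_mul_iteratedFDeriv volume k n) le_top le_top w]
    have hsum : ∑ p ∈ Finset.range (n + 1) ×ˢ Finset.range (m + 1),
        ∫ v, ‖v‖ ^ p.1 * ‖iteratedFDeriv ℝ p.2 f v‖ ≤ (n + 1) * (m + 1) * M := by
      grw [Finset.sum_le_card_nsmul _ _ M fun p hp => by
        simp only [Finset.mem_product, Finset.mem_range] at hp
        exact hM p.1 (by omega) p.2 (by omega)]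
      simp
    have h2π : 1 ≤ 2 * π := by linarith [pi_gt_three]
    have h2l : 1 ≤ 2 * (l : ℝ) + 2 := by linarith [(Nat.cast_nonneg l : (0 : ℝ) ≤ l)]
    calc (2 * π) ^ n * (2 * (n : ℝ) + 2) ^ m *
          ∑ p ∈ Finset.range (n + 1) ×ˢ Finset.range (m + 1),
            ∫ v, ‖v‖ ^ p.1 * ‖iteratedFDeriv ℝ p.2 f v‖
        ≤ (2 * π) ^ l * (2 * (l : ℝ) + 2) ^ m * ((l + 1) * (q + 1) * M) := by
          grw [hsum]; gcongr
      _ ≤ B := by rw [hB]; gcongr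
  calc (1 + ‖w‖) ^ q * ‖iteratedFDeriv ℝ n (𝓕 ⇑f) w‖
      ≤ 2 ^ (q - 1) * (1 ^ q + ‖w‖ ^ q) * ‖iteratedFDeriv ℝ n (𝓕 ⇑f) w‖ := by
        gcongr; exact add_pow_le zero_le_one (norm_nonneg w) q
    _ = 2 ^ (q - 1) * (‖w‖ ^ 0 * ‖iteratedFDeriv ℝ n (𝓕 ⇑f) w‖
          + ‖w‖ ^ q * ‖iteratedFDeriv ℝ n (𝓕 ⇑f) w‖) := by ring
    _ ≤ 2 ^ q * (B + B) := by
        gcongr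
        · norm_num
        · omega
        · exact hmoment 0 (Nat.zero_le _)
        · exact hmoment q le_rfl
    _ = 2 ^ (q + 1) * B := by ring

end Fourier

section EuclideanFourier

variable {d : ℕ}

lemma ftransform_eq_fourier_comp_smul (f : EuclideanSpace ℝ (Fin d) → ℂ) :
    ftransform d f = fun ξ => 𝓕 f ((2 * π)⁻¹ • ξ) := by
  funext ξ
  rw [ftransform, Real.fourier_eq]
  congr 1 with x
  rw [Circle.smul_def, Real.fourierChar_apply, real_inner_smul_right, smul_eq_mul]
  congr 2
  push_cast
  field_simp

lemma norm_iteratedFDeriv_ftransform_le (f : 𝓢(EuclideanSpace ℝ (Fin d), ℂ)) (n : ℕ)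
    (ξ : EuclideanSpace ℝ (Fin d)) :
    ‖iteratedFDeriv ℝ n (ftransform d f) ξ‖ ≤ ‖iteratedFDeriv ℝ n (𝓕 ⇑f) ((2 * π)⁻¹ • ξ)‖ := by
  have hsmooth : ContDiff ℝ n (𝓕 ⇑f) := by
    rw [← SchwartzMap.fourier_coe]
    exact (𝓕 f).smooth n
  have hscale : ‖(2 * π)⁻¹‖ ≤ 1 := by
    rw [norm_inv, Real.norm_of_nonneg (by positivity)]
    exact inv_le_one_of_one_le₀ (by linarith [pi_gt_three])
  rw [ftransform_eq_fourier_comp_smul, iteratedFDeriv_comp_const_smul _ hsmooth, norm_smul,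
    norm_pow]
  exact mul_le_of_le_one_left (norm_nonneg _) (pow_le_one₀ (norm_nonneg _) hscale)

lemma exists_one_add_pow_mul_norm_iteratedFDeriv_ftransform_le (q l : ℕ) :
    ∃ c > 0, ∀ (f : 𝓢(EuclideanSpace ℝ (Fin d), ℂ)) (M : ℝ),
      (∀ x, ∀ b ≤ q,
        (1 + ‖x‖) ^ (l + (volume : Measure (EuclideanSpace ℝ (Fin d))).integrablePower) *
          ‖iteratedFDeriv ℝ b f x‖ ≤ M) →
      ∀ ξ, ∀ n ≤ l, (1 + ‖ξ‖) ^ q * ‖iteratedFDeriv ℝ n (ftransform d f) ξ‖ ≤ c * M := by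
  set μ := (volume : Measure (EuclideanSpace ℝ (Fin d)))
  set J := 2 * 2 ^ μ.integrablePower * ∫ x, (1 + ‖x‖) ^ (-(μ.integrablePower : ℝ)) ∂μ
  have hJ : 0 < J :=
    mul_pos (by positivity) (integral_one_add_norm_rpow_neg_integrablePower_pos μ)
  refine ⟨(2 * π) ^ q * 2 ^ (q + 1) * (2 * π) ^ l * (2 * l + 2) ^ q * (l + 1) * (q + 1) * J,
    by positivity, fun f M hf ξ n hn => ?_⟩
  have hmoment : ∀ a ≤ l, ∀ b ≤ q, ∫ v, ‖v‖ ^ a * ‖iteratedFDeriv ℝ b f v‖ ≤ J * M :=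
    fun a ha b hb => integral_pow_mul_norm_le_of_one_add_pow_mul_le μ (by omega) (hf · b hb)
  set w := (2 * π)⁻¹ • ξ with hw
  have hξ : 1 + ‖ξ‖ ≤ 2 * π * (1 + ‖w‖) := by
    rw [hw, norm_smul, norm_inv, Real.norm_of_nonneg (by positivity), mul_add,
      mul_inv_cancel_left₀ (by positivity)]
    linarith [pi_gt_three]
  calc (1 + ‖ξ‖) ^ q * ‖iteratedFDeriv ℝ n (ftransform d f) ξ‖
      ≤ (2 * π * (1 + ‖w‖)) ^ q * ‖iteratedFDeriv ℝ n (𝓕 ⇑f) w‖ := by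
        gcongr
        exact norm_iteratedFDeriv_ftransform_le f n ξ
    _ = (2 * π) ^ q * ((1 + ‖w‖) ^ q * ‖iteratedFDeriv ℝ n (𝓕 ⇑f) w‖) := by
        rw [mul_pow, mul_assoc]
    _ ≤ (2 * π) ^ q *
          (2 ^ (q + 1) * ((2 * π) ^ l * (2 * l + 2) ^ q * ((l + 1) * (q + 1) * (J * M)))) := by
        grw [one_add_pow_mul_norm_iteratedFDeriv_fourier_le f hmoment hn w]
    _ = _ := by ring

end EuclideanFourier

theorem stmt10_general (d : ℕ) (R : Set (ℕ → ℝ))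
    (u : ℝ → SchwartzMap (EuclideanSpace ℝ (Fin d)) ℂ)
    (hu : ∃ N ∈ R, ∀ q l : ℕ, ∃ C > (0:ℝ), ∃ ε₀ ∈ Ioc (0:ℝ) 1, ∀ ε ∈ Ioo (0:ℝ) ε₀,
      ∀ x, ∀ n ≤ l, (1 + ‖x‖) ^ q * ‖iteratedFDeriv ℝ n (⇑(u ε)) x‖ ≤ C * ε ^ (-(N l))) :
    ∃ N' ∈ R, ∀ q l : ℕ, ∃ C > (0:ℝ), ∃ ε₀ ∈ Ioc (0:ℝ) 1, ∀ ε ∈ Ioo (0:ℝ) ε₀,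
      ∀ ξ, ∀ n ≤ l,
        (1 + ‖ξ‖) ^ q * ‖iteratedFDeriv ℝ n (ftransform d (⇑(u ε))) ξ‖
          ≤ C * ε ^ (-(N' q)) := by
  obtain ⟨N, hNR, hN⟩ := hu
  refine ⟨N, hNR, fun q l => ?_⟩
  obtain ⟨c, hc, hfourier⟩ :=
    exists_one_add_pow_mul_norm_iteratedFDeriv_ftransform_le (d := d) q l
  obtain ⟨C, hC, ε₀, hε₀, hbound⟩ :=
    hN (l + (volume : Measure (EuclideanSpace ℝ (Fin d))).integrablePower) q
  refine ⟨c * C, by positivity, ε₀, hε₀, fun ε hε ξ n hn => ?_⟩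
  rw [mul_assoc]
  exact hfourier (u ε) _ (hbound ε hε) ξ n hn

/-- Exchange theorem, one direction: moderate bounds depending only on the derivative
index `l` are transformed by the Fourier transform into moderate bounds depending only
on the weight index `q`. -/
theorem stmt10 (d : ℕ) (R : Set (ℕ → ℝ)) (hR : IsRegularSeq R)
    (u : ℝ → SchwartzMap (EuclideanSpace ℝ (Fin d)) ℂ)
    (hu : ∃ N ∈ R, ∀ q l : ℕ, ∃ C > (0:ℝ), ∃ ε₀ ∈ Ioc (0:ℝ) 1, ∀ ε ∈ Ioo (0:ℝ) ε₀,
      ∀ x, ∀ n ≤ l, (1 + ‖x‖) ^ q * ‖iteratedFDeriv ℝ n (⇑(u ε)) x‖ ≤ C * ε ^ (-(N l))) :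
    ∃ N' ∈ R, ∀ q l : ℕ, ∃ C > (0:ℝ), ∃ ε₀ ∈ Ioc (0:ℝ) 1, ∀ ε ∈ Ioo (0:ℝ) ε₀,
      ∀ ξ, ∀ n ≤ l,
        (1 + ‖ξ‖) ^ q * ‖iteratedFDeriv ℝ n (ftransform d (⇑(u ε))) ξ‖
          ≤ C * ε ^ (-(N' q)) :=
  stmt10_general d R u hu
end

section
/- Let R be a regular set of sequences and let (u_ε)_{ε∈(0,1]} be a net of Schwartz functions on ℝ^d for which there exists N ∈ R with μ_{q,l}(u_ε) = O(ε^{-N(q)}) as ε→0 for all (q,l) ∈ ℕ² (a bound depending only on the weight index q). Then there exists N' ∈ R such that μ_{q,l}(û_ε) = O(ε^{-N'(l)}) as ε→0 for all (q,l) ∈ ℕ² (a bound depending only on the derivative index l). -/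
open Set MeasureTheory

/-!
The Fourier transform exchanges decay and smoothness. By Mathlib's estimate
`Real.pow_mul_norm_iteratedFDeriv_fourier_le`, `‖w‖ ^ k * ‖Dⁿ (𝓕 f) w‖` is bounded by the integrals
`∫ ‖v‖ ^ i * ‖Dʲ f v‖` with `i ≤ n`, `j ≤ k`, and each of these is controlled by
`sup_v (1 + ‖v‖) ^ (n + P) * ‖Dʲ f v‖`, where `P` is a power making `(1 + ‖v‖) ^ (-P)` integrable.
Hence the `n`-th derivative of `û_ε`, with any weight `q`, costs only the weight index `n + P`
of `u_ε`, i.e. a factor `ε ^ (-N (n + P))`, and regularity (i) provides `N' ∈ R` with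
`N (n + P) ≤ N' n`. Since `ftransform` is `𝓕` rescaled by `2π`, only constants change.
-/

open Real FourierTransform
open scoped SchwartzMap

lemma pow_mul_le_of_one_add_pow_mul_le {t y M : ℝ} (ht : 0 ≤ t) (hy : 0 ≤ y) {a m : ℕ}
    (ham : a ≤ m) (h : (1 + t) ^ m * y ≤ M) : t ^ a * y ≤ M := by
  refine le_trans ?_ h
  gcongr
  calc t ^ a ≤ (1 + t) ^ a := by gcongr; linarith
    _ ≤ (1 + t) ^ m := pow_le_pow_right₀ (by linarith) ham

lemma one_add_pow_mul_le_two_pow_mul {t y A : ℝ} (ht : 0 ≤ t) (hy : 0 ≤ y) {q : ℕ}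
    (h₀ : y ≤ A) (hq : t ^ q * y ≤ A) : (1 + t) ^ q * y ≤ 2 ^ q * A := by
  rcases le_total t 1 with ht1 | ht1
  · calc (1 + t) ^ q * y ≤ 2 ^ q * y := by gcongr; linarith
      _ ≤ 2 ^ q * A := by gcongr
  · calc (1 + t) ^ q * y ≤ (2 * t) ^ q * y := by gcongr; linarith
      _ = 2 ^ q * (t ^ q * y) := by ring
      _ ≤ 2 ^ q * A := by gcongr

lemma integral_pow_mul_le_of_one_add_pow_mul_le {E F : Type*} [NormedAddCommGroup E]
    [MeasurableSpace E] [NormedAddCommGroup F] [NormedSpace ℝ F] (μ : Measure E)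
    [μ.HasTemperateGrowth]
    {f : E → F} {k m : ℕ} {M : ℝ} (hkm : k + μ.integrablePower ≤ m)
    (h : ∀ x, (1 + ‖x‖) ^ m * ‖f x‖ ≤ M) :
    ∫ x, ‖x‖ ^ k * ‖f x‖ ∂μ ≤
      2 ^ μ.integrablePower * (∫ x, (1 + ‖x‖) ^ (-(μ.integrablePower : ℝ)) ∂μ) * (M + M) :=
  integral_pow_mul_le_of_le_of_pow_mul_le
    (fun x ↦ by
      simpa using pow_mul_le_of_one_add_pow_mul_le (norm_nonneg x) (norm_nonneg _) m.zero_le (h x))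
    (fun x ↦ pow_mul_le_of_one_add_pow_mul_le (norm_nonneg x) (norm_nonneg _) hkm (h x))

theorem ContinuousLinearMap.norm_iteratedFDeriv_comp_right_le {𝕜 E F G : Type*}
    [NontriviallyNormedField 𝕜] [NormedAddCommGroup E] [NormedSpace 𝕜 E] [NormedAddCommGroup F]
    [NormedSpace 𝕜 F] [NormedAddCommGroup G] [NormedSpace 𝕜 G] (g : G →L[𝕜] E) {f : E → F}
    {n : WithTop ℕ∞} (hf : ContDiff 𝕜 n f) (x : G) {i : ℕ} (hi : i ≤ n) :
    ‖iteratedFDeriv 𝕜 i (f ∘ g) x‖ ≤ ‖iteratedFDeriv 𝕜 i f (g x)‖ * ‖g‖ ^ i := by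
  rw [g.iteratedFDeriv_comp_right hf x hi]
  simpa using (iteratedFDeriv 𝕜 i f (g x)).norm_compContinuousLinearMap_le fun _ ↦ g

theorem norm_iteratedFDeriv_comp_smul_le {𝕜 E F : Type*} [NontriviallyNormedField 𝕜]
    [NormedAddCommGroup E] [NormedSpace 𝕜 E] [NormedAddCommGroup F] [NormedSpace 𝕜 F]
    {c : 𝕜} (hc : ‖c‖ ≤ 1) {f : E → F} {n : WithTop ℕ∞} (hf : ContDiff 𝕜 n f) (x : E) {i : ℕ}
    (hi : i ≤ n) :
    ‖iteratedFDeriv 𝕜 i (f ∘ (c • ContinuousLinearMap.id 𝕜 E)) x‖ ≤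
      ‖iteratedFDeriv 𝕜 i f (c • x)‖ := by
  have hA : ‖c • ContinuousLinearMap.id 𝕜 E‖ ≤ 1 :=
    (norm_smul_le _ _).trans (mul_le_one₀ hc (norm_nonneg _) ContinuousLinearMap.norm_id_le)
  exact ((c • ContinuousLinearMap.id 𝕜 E).norm_iteratedFDeriv_comp_right_le hf x hi).trans
    (mul_le_of_le_one_right (norm_nonneg _) (pow_le_one₀ (norm_nonneg _) hA))

section Fourier

variable (V : Type*) [NormedAddCommGroup V] [InnerProductSpace ℝ V] [FiniteDimensional ℝ V]
  [MeasurableSpace V] [BorelSpace V]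

/-- `(2 * π) ^ n * (2 * n + 2) ^ q` is the constant of `Real.pow_mul_norm_iteratedFDeriv_fourier_le`,
`(n + 1) * (q + 1)` the number of integrals there, and the last factor bounds each of them by
`integral_pow_mul_le_of_le_of_pow_mul_le`. -/
noncomputable def fourierDecayConst (n q : ℕ) : ℝ :=
  (2 * π) ^ n * (2 * n + 2) ^ q * ((n + 1) * (q + 1)) *
    (2 ^ (volume : Measure V).integrablePower *
      (∫ x : V, (1 + ‖x‖) ^ (-((volume : Measure V).integrablePower : ℝ))) * 2)

lemma integral_one_add_norm_rpow_neg_integrablePower_pos_s11 :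
    0 < ∫ x : V, (1 + ‖x‖) ^ (-((volume : Measure V).integrablePower : ℝ)) := by
  rw [integral_pos_iff_support_of_nonneg (fun x ↦ by positivity)
    (Measure.integrable_pow_neg_integrablePower _)]
  have : Function.support (fun x : V ↦ (1 + ‖x‖) ^ (-((volume : Measure V).integrablePower : ℝ)))
      = univ := eq_univ_of_forall fun x ↦ (by positivity : (0 : ℝ) < _).ne'
  rw [this]
  exact Measure.measure_univ_pos.2 (NeZero.ne _)

lemma fourierDecayConst_pos (n q : ℕ) : 0 < fourierDecayConst V n q := by
  have := integral_one_add_norm_rpow_neg_integrablePower_pos_s11 V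
  unfold fourierDecayConst
  positivity

lemma fourierDecayConst_mono_left {n l : ℕ} (hnl : n ≤ l) (q : ℕ) :
    fourierDecayConst V n q ≤ fourierDecayConst V l q := by
  unfold fourierDecayConst
  have := (integral_one_add_norm_rpow_neg_integrablePower_pos_s11 V).le
  have : (1 : ℝ) ≤ 2 * π := by linarith [pi_gt_three]
  gcongr

variable {V} {E : Type*} [NormedAddCommGroup E] [NormedSpace ℂ E]

lemma pow_mul_norm_iteratedFDeriv_fourier_le_of_one_add_pow_mul_le (f : 𝓢(V, E))
    {k q n m : ℕ} {M : ℝ} (hkq : k ≤ q) (hnm : n + (volume : Measure V).integrablePower ≤ m)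
    (h : ∀ x, ∀ j ≤ q, (1 + ‖x‖) ^ m * ‖iteratedFDeriv ℝ j f x‖ ≤ M) (w : V) :
    ‖w‖ ^ k * ‖iteratedFDeriv ℝ n (𝓕 (f : V → E)) w‖ ≤ fourierDecayConst V n q * M := by
  set P := (volume : Measure V).integrablePower
  set B := 2 ^ P * (∫ x : V, (1 + ‖x‖) ^ (-(P : ℝ))) * (M + M)
  have hterm : ∀ p ∈ Finset.range (n + 1) ×ˢ Finset.range (k + 1),
      ∫ v, ‖v‖ ^ p.1 * ‖iteratedFDeriv ℝ p.2 f v‖ ≤ B := by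
    intro p hp
    simp only [Finset.mem_product, Finset.mem_range] at hp
    exact integral_pow_mul_le_of_one_add_pow_mul_le volume (by omega)
      fun x ↦ h x p.2 (by omega)
  have hB : 0 ≤ B := (integral_nonneg fun v ↦ by positivity).trans (hterm (0, 0) (by simp))
  calc ‖w‖ ^ k * ‖iteratedFDeriv ℝ n (𝓕 (f : V → E)) w‖
      ≤ (2 * π) ^ n * (2 * n + 2) ^ k * ∑ p ∈ Finset.range (n + 1) ×ˢ Finset.range (k + 1),
          ∫ v, ‖v‖ ^ p.1 * ‖iteratedFDeriv ℝ p.2 f v‖ :=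
        pow_mul_norm_iteratedFDeriv_fourier_le (f.smooth ⊤)
          (fun k n _ _ ↦ f.integrable_pow_mul_iteratedFDeriv volume k n) le_top le_top w
    _ ≤ (2 * π) ^ n * (2 * n + 2) ^ k * ((n + 1) * (k + 1) * B) := by
        grw [Finset.sum_le_card_nsmul _ _ _ hterm]
        simp
    _ ≤ fourierDecayConst V n q * M := by
        unfold fourierDecayConst
        calc _ ≤ (2 * π) ^ n * (2 * n + 2) ^ q * ((n + 1) * (q + 1) * B) := by
              gcongr
              linarith
          _ = _ := by ring

lemma one_add_pow_mul_norm_iteratedFDeriv_fourier_le_s11 (f : 𝓢(V, E))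
    {q n m : ℕ} {M : ℝ} (hnm : n + (volume : Measure V).integrablePower ≤ m)
    (h : ∀ x, ∀ j ≤ q, (1 + ‖x‖) ^ m * ‖iteratedFDeriv ℝ j f x‖ ≤ M) (w : V) :
    (1 + ‖w‖) ^ q * ‖iteratedFDeriv ℝ n (𝓕 (f : V → E)) w‖ ≤
      2 ^ q * (fourierDecayConst V n q * M) := by
  have h₀ := pow_mul_norm_iteratedFDeriv_fourier_le_of_one_add_pow_mul_le f (Nat.zero_le q) hnm h w
  rw [pow_zero, one_mul] at h₀
  exact one_add_pow_mul_le_two_pow_mul (norm_nonneg w) (norm_nonneg _) h₀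
    (pow_mul_norm_iteratedFDeriv_fourier_le_of_one_add_pow_mul_le f le_rfl hnm h w)

end Fourier

open ContinuousLinearMap in
lemma ftransform_eq_fourier_comp (d : ℕ) (f : EuclideanSpace ℝ (Fin d) → ℂ) :
    ftransform d f = 𝓕 f ∘ ((2 * π)⁻¹ • ContinuousLinearMap.id ℝ (EuclideanSpace ℝ (Fin d))) := by
  ext ξ
  simp only [ftransform, Function.comp_apply, smul_apply, ContinuousLinearMap.id_apply,
    fourier_eq', real_inner_smul_right, smul_eq_mul]
  congr 1 with x
  congr 1
  push_cast
  field_simp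

lemma one_add_pow_mul_norm_iteratedFDeriv_ftransform_le {d : ℕ}
    (f : 𝓢(EuclideanSpace ℝ (Fin d), ℂ)) {q n m : ℕ} {M : ℝ}
    (hnm : n + (volume : Measure (EuclideanSpace ℝ (Fin d))).integrablePower ≤ m)
    (h : ∀ x, ∀ j ≤ q, (1 + ‖x‖) ^ m * ‖iteratedFDeriv ℝ j f x‖ ≤ M)
    (ξ : EuclideanSpace ℝ (Fin d)) :
    (1 + ‖ξ‖) ^ q * ‖iteratedFDeriv ℝ n (ftransform d f) ξ‖ ≤
      (2 * π) ^ q * (2 ^ q * (fourierDecayConst (EuclideanSpace ℝ (Fin d)) n q * M)) := by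
  have hc : ‖(2 * π)⁻¹‖ ≤ 1 := by
    rw [norm_inv, norm_of_nonneg (by positivity)]
    exact inv_le_one_of_one_le₀ (by linarith [pi_gt_three])
  have hξ : 1 + ‖ξ‖ ≤ 2 * π * (1 + ‖(2 * π)⁻¹ • ξ‖) := by
    rw [norm_smul, norm_inv, norm_of_nonneg (by positivity), mul_add, ← mul_assoc,
      mul_inv_cancel₀ (by positivity), one_mul, mul_one]
    linarith [pi_gt_three]
  have hD : ‖iteratedFDeriv ℝ n (ftransform d f) ξ‖ ≤
      ‖iteratedFDeriv ℝ n (𝓕 (f : EuclideanSpace ℝ (Fin d) → ℂ)) ((2 * π)⁻¹ • ξ)‖ := by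
    rw [ftransform_eq_fourier_comp]
    exact norm_iteratedFDeriv_comp_smul_le hc
      (contDiff_fourier fun k _ ↦ f.integrable_pow_mul volume k) ξ (by exact_mod_cast le_top)
  calc (1 + ‖ξ‖) ^ q * ‖iteratedFDeriv ℝ n (ftransform d f) ξ‖
      ≤ (2 * π * (1 + ‖(2 * π)⁻¹ • ξ‖)) ^ q *
          ‖iteratedFDeriv ℝ n (𝓕 (f : EuclideanSpace ℝ (Fin d) → ℂ)) ((2 * π)⁻¹ • ξ)‖ := by
        gcongr
    _ = (2 * π) ^ q * ((1 + ‖(2 * π)⁻¹ • ξ‖) ^ q *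
          ‖iteratedFDeriv ℝ n (𝓕 (f : EuclideanSpace ℝ (Fin d) → ℂ)) ((2 * π)⁻¹ • ξ)‖) := by
        rw [mul_pow, mul_assoc]
    _ ≤ (2 * π) ^ q * (2 ^ q * (fourierDecayConst (EuclideanSpace ℝ (Fin d)) n q * M)) :=
        mul_le_mul_of_nonneg_left
          (one_add_pow_mul_norm_iteratedFDeriv_fourier_le_s11 f hnm h ((2 * π)⁻¹ • ξ)) (by positivity)

/-- Exchange theorem, the other direction: moderate bounds depending only on the weight
index `q` are transformed by the Fourier transform into moderate bounds depending only
on the derivative index `l`. -/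
theorem stmt11 (d : ℕ) (R : Set (ℕ → ℝ)) (hR : IsRegularSeq R)
    (u : ℝ → SchwartzMap (EuclideanSpace ℝ (Fin d)) ℂ)
    (hu : ∃ N ∈ R, ∀ q l : ℕ, ∃ C > (0:ℝ), ∃ ε₀ ∈ Ioc (0:ℝ) 1, ∀ ε ∈ Ioo (0:ℝ) ε₀,
      ∀ x, ∀ n ≤ l, (1 + ‖x‖) ^ q * ‖iteratedFDeriv ℝ n (⇑(u ε)) x‖ ≤ C * ε ^ (-(N q))) :
    ∃ N' ∈ R, ∀ q l : ℕ, ∃ C > (0:ℝ), ∃ ε₀ ∈ Ioc (0:ℝ) 1, ∀ ε ∈ Ioo (0:ℝ) ε₀,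
      ∀ ξ, ∀ n ≤ l,
        (1 + ‖ξ‖) ^ q * ‖iteratedFDeriv ℝ n (ftransform d (⇑(u ε))) ξ‖
          ≤ C * ε ^ (-(N' l)) := by
  obtain ⟨N, hNR, hN⟩ := hu
  set V := EuclideanSpace ℝ (Fin d)
  set P := (volume : Measure V).integrablePower
  obtain ⟨N', hN'R, hNN'⟩ := hR.2.2.1 N hNR P 0
  refine ⟨N', hN'R, fun q l ↦ ?_⟩
  obtain ⟨C, hC, ε₀, hε₀, hbound⟩ := hN (l + P) q
  have hK := fourierDecayConst_pos V l q
  refine ⟨(2 * π) ^ q * (2 ^ q * (fourierDecayConst V l q * C)), by positivity, ε₀, hε₀,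
    fun ε hε ξ n hn ↦ ?_⟩
  have hεN : ε ^ (-N (l + P)) ≤ ε ^ (-N' l) :=
    rpow_le_rpow_of_exponent_ge hε.1 (hε.2.le.trans hε₀.2) (by simpa using hNN' l)
  calc (1 + ‖ξ‖) ^ q * ‖iteratedFDeriv ℝ n (ftransform d (u ε)) ξ‖
      ≤ (2 * π) ^ q * (2 ^ q * (fourierDecayConst V n q * (C * ε ^ (-N (l + P))))) :=
        one_add_pow_mul_norm_iteratedFDeriv_ftransform_le (u ε) (by omega) (hbound ε hε) ξ
    _ ≤ (2 * π) ^ q * (2 ^ q * (fourierDecayConst V l q * (C * ε ^ (-N' l)))) := by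
        have hε0 := hε.1
        gcongr
        exact fourierDecayConst_mono_left V hn q
    _ = (2 * π) ^ q * (2 ^ q * (fourierDecayConst V l q * C)) * ε ^ (-N' l) := by ring
end

section
/- Let g : ℝ^d → ℂ be a function of polynomial growth: there exist m ∈ ℕ and C₁ > 0 with |g(ξ)| ≤ C₁ (1+|ξ|)^{m} for all ξ. Let φ : ℝ^d → ℂ satisfy |1 − φ(t)| ≤ C |t| for all t ∈ ℝ^d and some constant C > 0. Assume there exists N ∈ ℕ such that for every q ∈ ℕ there exist C_q > 0 and ε_q ∈ (0,1] with sup_{ξ ∈ ℝ^d} (1+|ξ|)^q |g(ξ)| |φ(ε ξ)| ≤ C_q ε^{-N} for all ε ∈ (0, ε_q). Then g is rapidly decreasing: for every r ∈ ℕ, sup_{ξ ∈ ℝ^d} (1+|ξ|)^r |g(ξ)| < ∞. -/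
open Set

/-- If `g` has polynomial growth, `φ` satisfies `|1 − φ(t)| ≤ C|t|`, and
`(1+|ξ|)^q |g(ξ)| |φ(εξ)| ≤ C_q ε^{-N}` for small `ε` with `N` independent of `q`,
then `g` is rapidly decreasing. -/
theorem stmt13 (d : ℕ) (g φ : EuclideanSpace ℝ (Fin d) → ℂ)
    (m : ℕ) (C₁ : ℝ) (hC₁ : 0 < C₁)
    (hg : ∀ ξ, ‖g ξ‖ ≤ C₁ * (1 + ‖ξ‖) ^ m)
    (C : ℝ) (hC : 0 < C) (hφ : ∀ t, ‖1 - φ t‖ ≤ C * ‖t‖)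
    (N : ℕ)
    (hbound : ∀ q : ℕ, ∃ Cq > (0:ℝ), ∃ εq ∈ Ioc (0:ℝ) 1, ∀ ε ∈ Ioo (0:ℝ) εq, ∀ ξ,
      (1 + ‖ξ‖) ^ q * ‖g ξ‖ * ‖φ (ε • ξ)‖ ≤ Cq * ε ^ (-(N : ℝ))) :
    ∀ r : ℕ, ∃ M : ℝ, ∀ ξ, (1 + ‖ξ‖) ^ r * ‖g ξ‖ ≤ M := by
  intro r
  obtain ⟨Cq, hCq, εq, ⟨hεq0, hεq1⟩, hb⟩ := hbound (r + N)
  set δ : ℝ := min εq (1 / (2 * C)) / 2 with hδdef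
  have hδ0 : 0 < δ := by
    have : 0 < min εq (1 / (2 * C)) := lt_min hεq0 (by positivity)
    positivity
  have hδεq : δ < εq := by
    have h1 : min εq (1 / (2 * C)) ≤ εq := min_le_left _ _
    have h2 : 0 < min εq (1 / (2 * C)) := lt_min hεq0 (by positivity)
    rw [hδdef]; linarith
  have hδC : δ ≤ 1 / (2 * C) := by
    have h1 : min εq (1 / (2 * C)) ≤ 1 / (2 * C) := min_le_right _ _
    have h2 : 0 < min εq (1 / (2 * C)) := lt_min hεq0 (by positivity)
    rw [hδdef]; linarith
  refine ⟨2 * (Cq / δ ^ N), fun ξ => ?_⟩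
  have h1 : (0:ℝ) < 1 + ‖ξ‖ := by positivity
  set ε : ℝ := δ / (1 + ‖ξ‖) with hεdef
  have hε0 : 0 < ε := by positivity
  have hεδ : ε ≤ δ := by
    rw [hεdef, div_le_iff₀ h1]
    nlinarith [norm_nonneg ξ]
  have hεlt : ε < εq := lt_of_le_of_lt hεδ hδεq
  -- lower bound for ‖φ (ε • ξ)‖
  have hφlb : (1:ℝ) / 2 ≤ ‖φ (ε • ξ)‖ := by
    have h2 : ‖(1:ℂ)‖ - ‖φ (ε • ξ)‖ ≤ ‖1 - φ (ε • ξ)‖ := norm_sub_norm_le _ _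
    have h3 : ‖1 - φ (ε • ξ)‖ ≤ C * ‖ε • ξ‖ := hφ _
    have h4 : ‖ε • ξ‖ = ε * ‖ξ‖ := by
      rw [norm_smul, Real.norm_eq_abs, abs_of_pos hε0]
    have h5 : C * (ε * ‖ξ‖) ≤ 1 / 2 := by
      have : ε * ‖ξ‖ ≤ δ := by
        rw [hεdef, div_mul_eq_mul_div, div_le_iff₀ h1]
        nlinarith [norm_nonneg ξ]
      have hδhalf : C * δ ≤ 1 / 2 := by
        rw [le_div_iff₀ (by positivity : (0:ℝ) < 2 * C)] at hδC
        nlinarith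
      nlinarith [norm_nonneg ξ, hε0.le]
    have h6 : ‖(1:ℂ)‖ = 1 := norm_one
    rw [h6] at h2
    rw [h4] at h3
    linarith
  have key := hb ε ⟨hε0, hεlt⟩ ξ
  have hrpow : ε ^ (-(N : ℝ)) = (1 + ‖ξ‖) ^ N / δ ^ N := by
    rw [Real.rpow_neg hε0.le, Real.rpow_natCast, hεdef, div_pow, inv_div]
  rw [hrpow] at key
  have hPN : (0:ℝ) < (1 + ‖ξ‖) ^ N := by positivity
  have hδN : (0:ℝ) < δ ^ N := by positivity
  set D : ℝ := Cq / δ ^ N with hD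
  have hkey2 : (1 + ‖ξ‖) ^ r * ‖g ξ‖ * (1 + ‖ξ‖) ^ N ≤ 2 * D * (1 + ‖ξ‖) ^ N := by
    have hA : (0:ℝ) ≤ (1 + ‖ξ‖) ^ (r + N) * ‖g ξ‖ := by positivity
    have h7 : (1 + ‖ξ‖) ^ (r + N) * ‖g ξ‖ * (1 / 2)
        ≤ (1 + ‖ξ‖) ^ (r + N) * ‖g ξ‖ * ‖φ (ε • ξ)‖ :=
      mul_le_mul_of_nonneg_left hφlb hA
    have h8 : Cq * ((1 + ‖ξ‖) ^ N / δ ^ N) = D * (1 + ‖ξ‖) ^ N := by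
      rw [hD]; field_simp
    rw [pow_add] at h7
    rw [h8, pow_add] at key
    nlinarith [key, h7]
  exact le_of_mul_le_mul_right hkey2 hPN
end

section
/- Let R be a regular set of sequences, let K ⊆ ℝ^d be compact, and let (u_ε)_{ε∈(0,1]} be a net of smooth functions ℝ^d → ℂ with supp u_ε ⊆ K for all ε. Assume there exists N ∈ R such that for every q ∈ ℕ, sup_{ξ ∈ ℝ^d} (1+|ξ|)^q |û_ε(ξ)| = O(ε^{-N(q)}) as ε→0. Then there exists N' ∈ R such that for every l ∈ ℕ, sup{ |∂^α u_ε(x)| : x ∈ ℝ^d, |α| ≤ l } = O(ε^{-N'(l)}) as ε→0. -/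
open Set MeasureTheory Real
open scoped FourierTransform

private lemma lemA (d : ℕ) (u : EuclideanSpace ℝ (Fin d) → ℂ) (w : EuclideanSpace ℝ (Fin d)) :
    𝓕 u w = ftransform d u ((2 * π) • w) := by
  rw [Real.fourier_eq, ftransform]
  congr 1
  ext v
  rw [Circle.smul_def, Real.fourierChar_apply, smul_eq_mul]
  congr 1
  rw [real_inner_smul_right]
  push_cast
  ring


/-- If a net of smooth functions supported in a fixed compact set `K` has Fourier
transforms satisfying `(1+|ξ|)^q |û_ε(ξ)| = O(ε^{-N(q)})` with `N ∈ R`, then the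
derivatives of `u_ε` satisfy bounds `O(ε^{-N'(l)})` for some `N' ∈ R`. -/
theorem stmt18 (d : ℕ) (R : Set (ℕ → ℝ)) (hR : IsRegularSeq R)
    (K : Set (EuclideanSpace ℝ (Fin d))) (hK : IsCompact K)
    (u : ℝ → EuclideanSpace ℝ (Fin d) → ℂ)
    (hu_smooth : ∀ ε ∈ Ioc (0:ℝ) 1, ContDiff ℝ (⊤ : ℕ∞) (u ε))
    (hu_supp : ∀ ε ∈ Ioc (0:ℝ) 1, tsupport (u ε) ⊆ K)
    (hhat : ∃ N ∈ R, ∀ q : ℕ, ∃ C > (0:ℝ), ∃ ε₀ ∈ Ioc (0:ℝ) 1, ∀ ε ∈ Ioo (0:ℝ) ε₀,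
      ∀ ξ, (1 + ‖ξ‖) ^ q * ‖ftransform d (u ε) ξ‖ ≤ C * ε ^ (-(N q))) :
    ∃ N' ∈ R, ∀ l : ℕ, ∃ C > (0:ℝ), ∃ ε₀ ∈ Ioc (0:ℝ) 1, ∀ ε ∈ Ioo (0:ℝ) ε₀,
      ∀ x, ∀ n ≤ l, ‖iteratedFDeriv ℝ n (u ε) x‖ ≤ C * ε ^ (-(N' l)) := by
  obtain ⟨hne, hnonneg, hshift, hmaxR, haddR⟩ := hR
  obtain ⟨N, hNR, hN⟩ := hhat
  obtain ⟨N₁, hN₁R, hN₁⟩ := hshift N hNR (d + 1) 0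
  obtain ⟨N', hN'R, hN'add⟩ := haddR N₁ hN₁R N₁ hN₁R
  refine ⟨N', hN'R, ?_⟩
  intro l
  -- choose constants
  choose C hCpos ε₀ hε₀ hbound using hN
  -- key exponent inequality
  have key : ∀ n ≤ l, N (n + (d + 1)) ≤ N' l := by
    intro n hn
    have h1 : N (n + (d + 1)) ≤ N₁ n := by simpa using hN₁ n
    have h2 : N₁ n + N₁ (l - n) ≤ N' (n + (l - n)) := hN'add n (l - n)
    have h3 : 0 ≤ N₁ (l - n) := hnonneg N₁ hN₁R _
    have h4 : n + (l - n) = l := by omega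
    rw [h4] at h2
    linarith
  -- the japanese bracket integral
  set Id : ℝ := ∫ v : EuclideanSpace ℝ (Fin d), (1 + ‖v‖) ^ (-(d + 1 : ℝ)) with hId
  have hIdint : Integrable (fun v : EuclideanSpace ℝ (Fin d) => (1 + ‖v‖) ^ (-(d + 1 : ℝ))) := by
    apply integrable_one_add_norm
    simp [finrank_euclideanSpace]
  have hIdnn : 0 ≤ Id := integral_nonneg (fun v => by positivity)
  -- choose ε₀
  set εm : ℝ := (Finset.range (l + d + 2)).inf' (by simp) (fun q => min (ε₀ q) 1) with hεm
  have hεm1 : εm ≤ 1 := le_trans (Finset.inf'_le _ (by simp : 0 ∈ Finset.range (l + d + 2))) (min_le_right _ _)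
  have hεmpos : 0 < εm := by
    rw [hεm, Finset.lt_inf'_iff]
    intro q _
    exact lt_min (hε₀ q).1 one_pos
  have hεmle : ∀ q < l + d + 2, εm ≤ ε₀ q := by
    intro q hq
    exact le_trans (Finset.inf'_le _ (by simp [hq])) (min_le_left _ _)
  -- final constant
  have hCsum : 0 ≤ (2 * π) ^ l * ((Finset.range (l + 1)).sum fun p => C (p + d + 1) * Id) :=
    mul_nonneg (by positivity) (Finset.sum_nonneg fun p _ => mul_nonneg (hCpos _).le hIdnn)
  refine ⟨(2 * π) ^ l * ((Finset.range (l + 1)).sum fun p => C (p + d + 1) * Id) + 1,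
    by linarith, εm, ⟨hεmpos, hεm1⟩, ?_⟩
  intro ε hε x n hn
  have hε1 : ε ∈ Ioc (0 : ℝ) 1 := ⟨hε.1, le_of_lt (lt_of_lt_of_le hε.2 hεm1)⟩
  set g : EuclideanSpace ℝ (Fin d) → ℂ := 𝓕 (u ε) with hg
  -- u ε is integrable
  have hcs : HasCompactSupport (u ε) :=
    IsCompact.of_isClosed_subset hK (isClosed_tsupport _) (hu_supp ε hε1)
  have hcont : Continuous (u ε) := (hu_smooth ε hε1).continuous
  have huint : Integrable (u ε) := hcont.integrable_of_hasCompactSupport hcs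
  have hgcont : Continuous g := by
    refine Real.contDiff_fourier (N := 0) ?_ |>.continuous
    intro n hn
    obtain rfl : n = 0 := by exact_mod_cast nonpos_iff_eq_zero.mp hn
    simpa using huint.norm
  -- decay of g
  have fact1 : ∀ q < l + d + 2, ∀ w, (1 + ‖w‖) ^ q * ‖g w‖ ≤ C q * ε ^ (-(N q)) := by
    intro q hq w
    have h2π : (1 : ℝ) ≤ 2 * π := by nlinarith [pi_gt_three]
    have hb := hbound q ε ⟨hε.1, lt_of_lt_of_le hε.2 (hεmle q hq)⟩ ((2 * π) • w)
    rw [hg, lemA]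
    refine le_trans ?_ hb
    have hw : ‖w‖ ≤ ‖(2 * π) • w‖ := by
      rw [norm_smul]
      simp only [Real.norm_eq_abs, abs_of_nonneg (by linarith : (0:ℝ) ≤ 2 * π)]
      nlinarith [norm_nonneg w]
    exact mul_le_mul_of_nonneg_right
      (pow_le_pow_left₀ (by positivity) (by linarith) q) (norm_nonneg _)
  -- pointwise domination
  have fact2 : ∀ k ≤ l, ∀ v, ‖v‖ ^ k * ‖g v‖ ≤
      (C (k + d + 1) * ε ^ (-(N (k + d + 1)))) * (1 + ‖v‖) ^ (-(d + 1 : ℝ)) := by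
    intro k hk v
    have h1 : ‖v‖ ^ k * ‖g v‖ ≤ (1 + ‖v‖) ^ k * ‖g v‖ :=
      mul_le_mul_of_nonneg_right
        (pow_le_pow_left₀ (norm_nonneg v) (by linarith [norm_nonneg v]) k) (norm_nonneg _)
    refine h1.trans ?_
    have hv1 : (0:ℝ) < 1 + ‖v‖ := by positivity
    have h2 : (1 + ‖v‖) ^ k = (1 + ‖v‖) ^ (k + d + 1) * (1 + ‖v‖) ^ (-(d + 1 : ℝ)) := by
      rw [← Real.rpow_natCast (1 + ‖v‖) (k + d + 1), ← Real.rpow_natCast (1 + ‖v‖) k,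
        ← Real.rpow_add hv1]
      congr 1
      push_cast
      ring
    rw [h2, mul_right_comm]
    exact mul_le_mul_of_nonneg_right (fact1 (k + d + 1) (by omega) v) (by positivity)
  -- integrability of the weighted transforms
  have fact3 : ∀ k ≤ l, Integrable (fun v : EuclideanSpace ℝ (Fin d) => ‖v‖ ^ k * ‖g v‖) := by
    intro k hk
    refine Integrable.mono' (hIdint.const_mul (C (k + d + 1) * ε ^ (-(N (k + d + 1)))))
      ?_ (ae_of_all _ fun v => ?_)
    · exact ((continuous_norm.pow k).mul hgcont.norm).aestronglyMeasurable
    · rw [Real.norm_of_nonneg (by positivity)]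
      exact fact2 k hk v
  -- the power comparison
  have hεpow : ∀ k ≤ l, ε ^ (-(N (k + d + 1))) ≤ ε ^ (-(N' l)) := fun k hk =>
    Real.rpow_le_rpow_of_exponent_ge hε.1 hε1.2 (neg_le_neg (key k hk))
  have hεpownn : (0:ℝ) ≤ ε ^ (-(N' l)) := Real.rpow_nonneg hε.1.le _
  -- integral bounds
  have fact4 : ∀ k ≤ l, (∫ v, ‖v‖ ^ k * ‖g v‖) ≤ C (k + d + 1) * Id * ε ^ (-(N' l)) := by
    intro k hk
    have h1 : (∫ v, ‖v‖ ^ k * ‖g v‖) ≤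
        ∫ v : EuclideanSpace ℝ (Fin d),
          (C (k + d + 1) * ε ^ (-(N (k + d + 1)))) * (1 + ‖v‖) ^ (-(d + 1 : ℝ)) :=
      integral_mono (fact3 k hk) (hIdint.const_mul _) (fact2 k hk)
    rw [integral_const_mul, ← hId] at h1
    refine h1.trans ?_
    have h3 := hεpow k hk
    have hC := (hCpos (k + d + 1)).le
    calc C (k + d + 1) * ε ^ (-(N (k + d + 1))) * Id
        ≤ C (k + d + 1) * ε ^ (-(N' l)) * Id :=
          mul_le_mul_of_nonneg_right (mul_le_mul_of_nonneg_left h3 hC) hIdnn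
      _ = C (k + d + 1) * Id * ε ^ (-(N' l)) := by ring
  -- g is integrable
  have fact5 : Integrable g := by
    rw [← integrable_norm_iff hgcont.aestronglyMeasurable]
    simpa using fact3 0 (Nat.zero_le l)
  -- Fourier inversion
  have hinv : u ε = (𝓕 g) ∘ ⇑(LinearIsometryEquiv.neg ℝ (E := EuclideanSpace ℝ (Fin d))) := by
    funext y
    have h := hcont.fourierInv_fourier_eq huint fact5
    have h2 : 𝓕⁻ g y = u ε y := congrFun h y
    rw [← h2, Real.fourierInv_eq_fourier_neg]
    simp
  have fact6 : ‖iteratedFDeriv ℝ n (u ε) x‖ = ‖iteratedFDeriv ℝ n (𝓕 g) (-x)‖ := by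
    rw [hinv, LinearIsometryEquiv.norm_iteratedFDeriv_comp_right]
    simp
  -- the derivative bound
  have fact7 : ‖iteratedFDeriv ℝ n (𝓕 g) (-x)‖ ≤ (2 * π) ^ n *
      ∑ p ∈ Finset.range (n + 1) ×ˢ Finset.range (0 + 1),
        ∫ v, ‖v‖ ^ p.1 * ‖iteratedFDeriv ℝ p.2 g v‖ := by
    have h'f : ∀ (k m : ℕ), (k:ℕ∞) ≤ (n:ℕ∞) → (m:ℕ∞) ≤ (0:ℕ∞) →
        Integrable (fun v : EuclideanSpace ℝ (Fin d) => ‖v‖ ^ k * ‖iteratedFDeriv ℝ m g v‖) := by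
      intro k m hkn hm0
      obtain rfl : m = 0 := by exact_mod_cast nonpos_iff_eq_zero.mp hm0
      have hkn' : k ≤ n := by exact_mod_cast hkn
      simpa [norm_iteratedFDeriv_zero] using fact3 k (hkn'.trans hn)
    have := Real.pow_mul_norm_iteratedFDeriv_fourier_le (f := g)
      (K := (n : ℕ∞)) (N := (0 : ℕ∞)) (contDiff_zero.mpr hgcont) h'f
      (le_refl _) (le_refl _) (-x)
    simpa using this
  -- bounding the sum
  have fact8 : ∑ p ∈ Finset.range (n + 1) ×ˢ Finset.range (0 + 1),
      (∫ v, ‖v‖ ^ p.1 * ‖iteratedFDeriv ℝ p.2 g v‖) ≤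
      ((Finset.range (l + 1)).sum fun p => C (p + d + 1) * Id) * ε ^ (-(N' l)) := by
    rw [Finset.sum_product]
    simp only [zero_add, Finset.sum_range_one, norm_iteratedFDeriv_zero]
    rw [Finset.sum_mul]
    calc ∑ p ∈ Finset.range (n + 1), ∫ v, ‖v‖ ^ p * ‖g v‖
        ≤ ∑ p ∈ Finset.range (n + 1), C (p + d + 1) * Id * ε ^ (-(N' l)) :=
          Finset.sum_le_sum fun p hp => fact4 p (by simp at hp; omega)
      _ ≤ ∑ p ∈ Finset.range (l + 1), C (p + d + 1) * Id * ε ^ (-(N' l)) :=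
          Finset.sum_le_sum_of_subset_of_nonneg (Finset.range_subset_range.mpr (by omega))
            (fun p _ _ => mul_nonneg (mul_nonneg (hCpos _).le hIdnn) hεpownn)
  -- conclude
  rw [fact6]
  refine fact7.trans ?_
  have h2π1 : (1:ℝ) ≤ 2 * π := by nlinarith [pi_gt_three]
  have hSnn : (0:ℝ) ≤ (Finset.range (l + 1)).sum fun p => C (p + d + 1) * Id :=
    Finset.sum_nonneg fun p _ => mul_nonneg (hCpos _).le hIdnn
  calc (2 * π) ^ n * ∑ p ∈ Finset.range (n + 1) ×ˢ Finset.range (0 + 1),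
        ∫ v, ‖v‖ ^ p.1 * ‖iteratedFDeriv ℝ p.2 g v‖
      ≤ (2 * π) ^ l * (((Finset.range (l + 1)).sum fun p => C (p + d + 1) * Id) * ε ^ (-(N' l))) := by
        apply mul_le_mul (pow_le_pow_right₀ h2π1 hn) fact8 ?_ (by positivity)
        refine Finset.sum_nonneg fun p _ => integral_nonneg fun v => by positivity
    _ ≤ ((2 * π) ^ l * ((Finset.range (l + 1)).sum fun p => C (p + d + 1) * Id) + 1) *
          ε ^ (-(N' l)) := by
        rw [add_mul, one_mul, ← mul_assoc]
        linarith
end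

section
/- Let R be a regular set of sequences, let K ⊆ ℝ^d be compact, and let (u_ε)_{ε∈(0,1]} be a net of smooth functions ℝ^d → ℂ with supp u_ε ⊆ K for all ε. Assume there exist M ∈ ℕ, C₀ > 0 and ε₀ ∈ (0,1] such that |û_ε(η)| ≤ C₀ ε^{-M} (1+|η|)^{-(d+1)} for all η ∈ ℝ^d and all ε ∈ (0,ε₀). Let Γ ⊆ ℝ^d \ {0} be an open cone (y ∈ Γ and t > 0 imply t y ∈ Γ), let ξ₀ ∈ Γ, and assume there exists N ∈ R such that for every q ∈ ℕ there are C_q > 0 and ε_q ∈ (0,1] with (1+|y|)^q |û_ε(y)| ≤ C_q ε^{-N(q)} for all y ∈ Γ and ε ∈ (0,ε_q). Then for every smooth compactly supported φ : ℝ^d → ℂ there exist an open cone Γ₁ with ξ₀ ∈ Γ₁ ⊆ Γ and a sequence N' ∈ R such that for every q ∈ ℕ there are C'_q > 0 and ε'_q ∈ (0,1] with (1+|y|)^q | (φu_ε)^∧ (y) | ≤ C'_q ε^{-N'(q)} for all y ∈ Γ₁ and ε ∈ (0, ε'_q), where (φu_ε)^∧ (y) = ∫_{ℝ^d} e^{-i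 x·y} φ(x) u_ε(x) dx. -/
open Set MeasureTheory

open Real FourierTransform Complex
open scoped RealInnerProductSpace

section Aux
variable {d : ℕ}

lemma ftransform_eq_fourierIntegral (f : EuclideanSpace ℝ (Fin d) → ℂ)
    (ξ : EuclideanSpace ℝ (Fin d)) :
    ftransform d f ξ = 𝓕 f ((2 * Real.pi)⁻¹ • ξ) := by
  rw [Real.fourier_eq']
  simp only [ftransform, smul_eq_mul, real_inner_smul_right]
  congr 1
  ext v
  congr 1
  have h : -2 * Real.pi * ((2 * Real.pi)⁻¹ * (inner ℝ v ξ : ℝ)) = -(inner ℝ v ξ : ℝ) := by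
    field_simp
  rw [h]
  push_cast
  ring

lemma ftransform_continuous (f : EuclideanSpace ℝ (Fin d) → ℂ) (hf : Integrable f) :
    Continuous (ftransform d f) := by
  have h1 : Continuous (𝓕 f) :=
    VectorFourier.fourierIntegral_continuous Real.continuous_fourierChar (innerSL ℝ).continuous₂ hf
  have : ftransform d f = fun ξ => 𝓕 f ((2 * Real.pi)⁻¹ • ξ) := by
    ext ξ; exact ftransform_eq_fourierIntegral f ξ
  rw [this]
  exact h1.comp (continuous_const_smul _)

lemma exists_schwartz (φ : EuclideanSpace ℝ (Fin d) → ℂ) (hs : ContDiff ℝ (⊤ : ℕ∞) φ)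
    (hc : HasCompactSupport φ) : ∃ Φ : SchwartzMap (EuclideanSpace ℝ (Fin d)) ℂ, ⇑Φ = φ := by
  refine ⟨⟨φ, hs.of_le (by simp), fun k n => ?_⟩, rfl⟩
  obtain ⟨C, hC⟩ := Continuous.bounded_above_of_compact_support
    (f := fun x : EuclideanSpace ℝ (Fin d) => ‖x‖ ^ k * ‖iteratedFDeriv ℝ n φ x‖)
    (((continuous_norm).pow k).mul ((hs.continuous_iteratedFDeriv (by exact_mod_cast le_top)).norm))
    (((hc.iteratedFDeriv n).norm).mul_left)
  exact ⟨C, fun x => by simpa using hC x⟩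

lemma schwartz_decay_one_add (g : SchwartzMap (EuclideanSpace ℝ (Fin d)) ℂ) (m : ℕ) :
    ∃ D > (0:ℝ), ∀ w, (1 + ‖w‖) ^ m * ‖g w‖ ≤ D := by
  have h := fun x => SchwartzMap.one_add_le_sup_seminorm_apply (𝕜 := ℝ) (m := (m, 0))
    (le_refl m) (le_refl 0) g x
  refine ⟨2 ^ m * ((Finset.Iic (m, 0)).sup (fun p => SchwartzMap.seminorm ℝ p.1 p.2) g) + 1,
    by positivity, fun w => ?_⟩
  have := h w
  rw [norm_iteratedFDeriv_zero] at this
  linarith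

lemma key_identity (φ f : EuclideanSpace ℝ (Fin d) → ℂ)
    (hφc : Continuous φ) (hφint : Integrable φ) (hg_cont : Continuous (𝓕 φ))
    (hg_int : Integrable (𝓕 φ))
    (hfc : Continuous f) (hfs : HasCompactSupport f) (y : EuclideanSpace ℝ (Fin d)) :
    ftransform d (fun x => φ x * f x) y
      = ∫ w, 𝓕 φ w * ftransform d f (y - (2 * Real.pi) • w) := by
  have hf_int : Integrable f := hfc.integrable_of_hasCompactSupport hfs
  have hinv : ∀ x, φ x = ∫ w, Complex.exp ((↑(2 * Real.pi * (inner ℝ w x : ℝ)) * Complex.I)) * 𝓕 φ w := by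
    intro x
    have := hφc.fourierInv_fourier_eq hφint hg_int
    conv_lhs => rw [← this]
    rw [Real.fourierInv_eq']
    simp [smul_eq_mul]
  set H : EuclideanSpace ℝ (Fin d) × EuclideanSpace ℝ (Fin d) → ℂ :=
    fun p => (Complex.exp (-(Complex.I * ((inner ℝ p.1 y : ℝ) : ℂ))) * f p.1) *
      (Complex.exp ((↑(2 * Real.pi * (inner ℝ p.2 p.1 : ℝ)) * Complex.I)) * 𝓕 φ p.2) with hH
  have hc1 : Continuous fun p : EuclideanSpace ℝ (Fin d) × EuclideanSpace ℝ (Fin d) =>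
      -(Complex.I * ((inner ℝ p.1 y : ℝ) : ℂ)) := by
    exact (Continuous.mul continuous_const (Complex.continuous_ofReal.comp
      (continuous_fst.inner continuous_const))).neg
  have hc2 : Continuous fun p : EuclideanSpace ℝ (Fin d) × EuclideanSpace ℝ (Fin d) =>
      ((2 * Real.pi * (inner ℝ p.2 p.1 : ℝ) : ℝ) : ℂ) * Complex.I := by
    exact Continuous.mul (Complex.continuous_ofReal.comp
      (Continuous.mul continuous_const (continuous_snd.inner continuous_fst))) continuous_const
  have hHcont : Continuous H := by
    exact ((Complex.continuous_exp.comp hc1).mul (hfc.comp continuous_fst)).mul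
      ((Complex.continuous_exp.comp hc2).mul (hg_cont.comp continuous_snd))
  have hexp1 : ∀ r : ℝ, ‖Complex.exp (-(Complex.I * (r : ℂ)))‖ = 1 := by
    intro r
    rw [show -(Complex.I * (r : ℂ)) = ((-r : ℝ) : ℂ) * Complex.I by push_cast; ring,
      Complex.norm_exp_ofReal_mul_I]
  have hHnorm : ∀ p, ‖H p‖ = ‖f p.1‖ * ‖𝓕 φ p.2‖ := by
    intro p
    simp only [hH, norm_mul]
    rw [hexp1, Complex.norm_exp_ofReal_mul_I]
    ring
  have hHint : Integrable H (volume.prod volume) := by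
    refine Integrable.mono' ((hf_int.norm.mul_prod hg_int.norm)) hHcont.aestronglyMeasurable
      (ae_of_all _ fun p => ?_)
    rw [hHnorm p]
  calc ftransform d (fun x => φ x * f x) y
      = ∫ x, ∫ w, H (x, w) := by
        simp only [ftransform]
        congr 1
        ext x
        simp only [hH]
        rw [hinv x, integral_const_mul]
        ring
    _ = ∫ w, ∫ x, H (x, w) := integral_integral_swap hHint
    _ = ∫ w, 𝓕 φ w * ftransform d f (y - (2 * Real.pi) • w) := by
        congr 1
        ext w
        rw [show ftransform d f (y - (2 * Real.pi) • w)
            = ∫ x, Complex.exp (-(Complex.I * ((inner ℝ x (y - (2 * Real.pi) • w) : ℝ) : ℂ))) * f x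
            from rfl, ← integral_const_mul]
        congr 1
        ext x
        simp only [hH]
        have hexp : Complex.exp (-(Complex.I * ((inner ℝ x y : ℝ) : ℂ))) *
            Complex.exp ((↑(2 * Real.pi * (inner ℝ w x : ℝ)) * Complex.I))
            = Complex.exp (-(Complex.I * ((inner ℝ x (y - (2 * Real.pi) • w) : ℝ) : ℂ))) := by
          rw [← Complex.exp_add]
          congr 1
          rw [inner_sub_right, real_inner_smul_right, real_inner_comm w x]
          push_cast
          ring
        rw [← hexp]
        ring

end Aux

set_option maxHeartbeats 2000000 in
/-- Microlocal lemma: if a compactly supported net `u_ε` has globally moderate Fourier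
transforms and `R`-regular bounds on a cone `Γ ∋ ξ₀`, then for every smooth compactly
supported `φ` the net `φu_ε` has `R`-regular Fourier bounds on a smaller cone
`Γ₁ ∋ ξ₀`. -/
theorem stmt19 (d : ℕ) (R : Set (ℕ → ℝ)) (hR : IsRegularSeq R)
    (K : Set (EuclideanSpace ℝ (Fin d))) (hK : IsCompact K)
    (u : ℝ → EuclideanSpace ℝ (Fin d) → ℂ)
    (hu_smooth : ∀ ε ∈ Ioc (0:ℝ) 1, ContDiff ℝ (⊤ : ℕ∞) (u ε))
    (hu_supp : ∀ ε ∈ Ioc (0:ℝ) 1, tsupport (u ε) ⊆ K)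
    (M : ℕ) (C₀ : ℝ) (hC₀ : 0 < C₀) (ε₀ : ℝ) (hε₀ : ε₀ ∈ Ioc (0:ℝ) 1)
    (hhat : ∀ ε ∈ Ioo (0:ℝ) ε₀, ∀ η : EuclideanSpace ℝ (Fin d),
      ‖ftransform d (u ε) η‖ ≤ C₀ * ε ^ (-(M : ℝ)) * ((1 + ‖η‖) ^ (d + 1))⁻¹)
    (Γ : Set (EuclideanSpace ℝ (Fin d))) (hΓ_open : IsOpen Γ)
    (hΓ_zero : (0 : EuclideanSpace ℝ (Fin d)) ∉ Γ)
    (hΓ_cone : ∀ y ∈ Γ, ∀ t : ℝ, 0 < t → t • y ∈ Γ)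
    (ξ₀ : EuclideanSpace ℝ (Fin d)) (hξ₀ : ξ₀ ∈ Γ)
    (N : ℕ → ℝ) (hN : N ∈ R)
    (hcone : ∀ q : ℕ, ∃ Cq > (0:ℝ), ∃ εq ∈ Ioc (0:ℝ) 1, ∀ y ∈ Γ, ∀ ε ∈ Ioo (0:ℝ) εq,
      (1 + ‖y‖) ^ q * ‖ftransform d (u ε) y‖ ≤ Cq * ε ^ (-(N q))) :
    ∀ φ : EuclideanSpace ℝ (Fin d) → ℂ, ContDiff ℝ (⊤ : ℕ∞) φ → HasCompactSupport φ →
      ∃ Γ₁ : Set (EuclideanSpace ℝ (Fin d)), IsOpen Γ₁ ∧ ξ₀ ∈ Γ₁ ∧ Γ₁ ⊆ Γ ∧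
        (∀ y ∈ Γ₁, ∀ t : ℝ, 0 < t → t • y ∈ Γ₁) ∧
        ∃ N' ∈ R, ∀ q : ℕ, ∃ Cq' > (0:ℝ), ∃ εq' ∈ Ioc (0:ℝ) 1,
          ∀ y ∈ Γ₁, ∀ ε ∈ Ioo (0:ℝ) εq',
            (1 + ‖y‖) ^ q * ‖ftransform d (fun x => φ x * u ε x) y‖
              ≤ Cq' * ε ^ (-(N' q)) := by
  intro φ hφs hφc
  -- Schwartz function facts for φ and 𝓕 φ
  obtain ⟨Φ, hΦ⟩ := exists_schwartz φ hφs hφc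
  set G := SchwartzMap.fourierTransformCLM ℂ Φ with hGdef
  have hG : ⇑G = 𝓕 φ := by rw [hGdef, SchwartzMap.fourierTransformCLM_apply, SchwartzMap.fourier_coe, hΦ]
  have hg_cont : Continuous (𝓕 φ) := hG ▸ G.continuous
  have hg_int : Integrable (𝓕 φ) := hG ▸ G.integrable
  have hgdecay : ∀ m : ℕ, ∃ D > (0:ℝ), ∀ w, (1 + ‖w‖) ^ m * ‖𝓕 φ w‖ ≤ D := by
    intro m
    obtain ⟨D, hD, h⟩ := schwartz_decay_one_add G m
    exact ⟨D, hD, fun w => by have := h w; rwa [show G w = 𝓕 φ w from congrFun hG w] at this⟩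
  have hφcont : Continuous φ := hφs.continuous
  have hφint : Integrable φ := hφcont.integrable_of_hasCompactSupport hφc
  -- geometry of the cone
  have hξ0ne : ξ₀ ≠ 0 := fun h => hΓ_zero (h ▸ hξ₀)
  have hξ0pos : 0 < ‖ξ₀‖ := norm_pos_iff.2 hξ0ne
  obtain ⟨r, hr0, hrball⟩ := Metric.isOpen_iff.1 hΓ_open ξ₀ hξ₀
  set c : ℝ := (r/2) / (‖ξ₀‖ + r/2) with hcdef
  have hc0 : 0 < c := div_pos (half_pos hr0) (by positivity)
  have hc1 : c < 1 := by
    rw [hcdef, div_lt_one (by positivity)]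
    linarith
  have hcmul : c * (‖ξ₀‖ + r/2) = r/2 := div_mul_cancel₀ _ (by positivity)
  set Γ₁ : Set (EuclideanSpace ℝ (Fin d)) :=
    {y | ∃ t : ℝ, 0 < t ∧ t • y ∈ Metric.ball ξ₀ (r/2)} with hΓ₁def
  have hΓ₁_open : IsOpen Γ₁ := by
    have : Γ₁ = ⋃ t ∈ Ioi (0:ℝ), (fun y : EuclideanSpace ℝ (Fin d) => t • y) ⁻¹'
        Metric.ball ξ₀ (r/2) := by
      ext y; simp [hΓ₁def, mem_iUnion, mem_Ioi]
    rw [this]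
    exact isOpen_biUnion fun t _ => Metric.isOpen_ball.preimage (continuous_const_smul t)
  have hξ₀mem : ξ₀ ∈ Γ₁ := ⟨1, one_pos, by simpa [Metric.mem_ball] using half_pos hr0⟩
  have hΓ₁_sub : Γ₁ ⊆ Γ := by
    rintro y ⟨t, ht, hmem⟩
    have h1 : t • y ∈ Γ := hrball (Metric.ball_subset_ball (by linarith) hmem)
    have := hΓ_cone _ h1 t⁻¹ (inv_pos.2 ht)
    rwa [smul_smul, inv_mul_cancel₀ ht.ne', one_smul] at this
  have hΓ₁_cone : ∀ y ∈ Γ₁, ∀ t : ℝ, 0 < t → t • y ∈ Γ₁ := by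
    rintro y ⟨t, ht, hmem⟩ s hs
    exact ⟨t/s, div_pos ht hs, by rwa [smul_smul, div_mul_cancel₀ _ hs.ne']⟩
  -- key geometric fact
  have hgeo : ∀ y ∈ Γ₁, ∀ η : EuclideanSpace ℝ (Fin d), ‖η - y‖ ≤ c * ‖y‖ →
      η ∈ Γ ∧ (1 - c) * ‖y‖ ≤ ‖η‖ := by
    rintro y ⟨t, ht, hmem⟩ η hle
    have hmem' : ‖t • y - ξ₀‖ < r/2 := by rwa [Metric.mem_ball, dist_eq_norm] at hmem
    have hty : t * ‖y‖ ≤ ‖ξ₀‖ + r/2 := by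
      have h1 : ‖t • y‖ - ‖ξ₀‖ ≤ ‖t • y - ξ₀‖ := norm_sub_norm_le _ _
      have h3 : ‖t • y‖ = t * ‖y‖ := by
        rw [norm_smul, Real.norm_eq_abs, abs_of_pos ht]
      linarith
    have hηball : t • η ∈ Metric.ball ξ₀ r := by
      rw [Metric.mem_ball, dist_eq_norm]
      have h1 : t • η - ξ₀ = t • (η - y) + (t • y - ξ₀) := by
        rw [smul_sub]; abel
      have h2 : ‖t • (η - y)‖ = t * ‖η - y‖ := by
        rw [norm_smul, Real.norm_eq_abs, abs_of_pos ht]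
      have h4 : t * ‖η - y‖ ≤ c * (t * ‖y‖) := by
        have := mul_le_mul_of_nonneg_left hle ht.le
        linarith [this]
      have h5 : c * (t * ‖y‖) ≤ c * (‖ξ₀‖ + r/2) := mul_le_mul_of_nonneg_left hty hc0.le
      calc ‖t • η - ξ₀‖ ≤ ‖t • (η - y)‖ + ‖t • y - ξ₀‖ := by rw [h1]; exact norm_add_le _ _
        _ < c * (‖ξ₀‖ + r/2) + r/2 := by rw [h2]; linarith
        _ = r := by rw [hcmul]; ring
    constructor
    · have := hΓ_cone _ (hrball hηball) t⁻¹ (inv_pos.2 ht)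
      rwa [smul_smul, inv_mul_cancel₀ ht.ne', one_smul] at this
    · have h1 : ‖y‖ - ‖η‖ ≤ ‖y - η‖ := norm_sub_norm_le _ _
      rw [norm_sub_rev] at h1
      nlinarith
  -- the new sequence N'
  obtain ⟨N', hN'R, hN'⟩ := hR.2.2.1 N hN 0 M
  have hNle : ∀ n, N n + M ≤ N' n := fun n => by simpa using hN' n
  have hNnn : ∀ n, 0 ≤ N n := hR.2.1 N hN
  have hMnn : (0:ℝ) ≤ M := Nat.cast_nonneg M
  refine ⟨Γ₁, hΓ₁_open, hξ₀mem, hΓ₁_sub, hΓ₁_cone, N', hN'R, fun q => ?_⟩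
  obtain ⟨Cq, hCq, εq, hεq, hconeq⟩ := hcone q
  obtain ⟨D, hD, hDle⟩ := hgdecay (q + (d+1))
  set c' : ℝ := min 1 (c / (2*Real.pi)) with hc'def
  have hc'0 : 0 < c' := lt_min one_pos (div_pos hc0 (by positivity))
  have hc'1 : c' ≤ 1 := min_le_left _ _
  set Ig : ℝ := ∫ w : EuclideanSpace ℝ (Fin d), ‖𝓕 φ w‖ with hIgdef
  have hIg_nn : 0 ≤ Ig := integral_nonneg fun w => norm_nonneg _
  have hjap : Integrable (fun w : EuclideanSpace ℝ (Fin d) => (1 + ‖w‖) ^ (-((d:ℝ)+1))) := by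
    apply integrable_one_add_norm
    rw [finrank_euclideanSpace_fin]
    linarith
  set IJ : ℝ := ∫ w : EuclideanSpace ℝ (Fin d), (1 + ‖w‖) ^ (-((d:ℝ)+1)) with hIJdef
  have hIJ_nn : 0 ≤ IJ := integral_nonneg fun w => Real.rpow_nonneg (by positivity) _
  set A1 : ℝ := Cq * (1-c)⁻¹ ^ q * Ig with hA1def
  set A2 : ℝ := C₀ * D * c'⁻¹ ^ q * IJ with hA2def
  have hA1nn : 0 ≤ A1 :=
    mul_nonneg (mul_nonneg hCq.le (pow_nonneg (inv_nonneg.2 (by linarith)) q)) hIg_nn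
  have hA2nn : 0 ≤ A2 :=
    mul_nonneg (mul_nonneg (mul_nonneg hC₀.le hD.le) (pow_nonneg (inv_nonneg.2 hc'0.le) q)) hIJ_nn
  refine ⟨A1 + A2 + 1, by linarith, min ε₀ εq,
    ⟨lt_min hε₀.1 hεq.1, le_trans (min_le_left _ _) hε₀.2⟩, fun y hy ε hε => ?_⟩
  have hε01 : ε ∈ Ioc (0:ℝ) 1 :=
    ⟨hε.1, le_trans hε.2.le (le_trans (min_le_left _ _) hε₀.2)⟩
  have hεε₀ : ε ∈ Ioo (0:ℝ) ε₀ := ⟨hε.1, lt_of_lt_of_le hε.2 (min_le_left _ _)⟩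
  have hεεq : ε ∈ Ioo (0:ℝ) εq := ⟨hε.1, lt_of_lt_of_le hε.2 (min_le_right _ _)⟩
  have hεM : (0:ℝ) ≤ ε ^ (-(M:ℝ)) := Real.rpow_nonneg hε.1.le _
  have hεN : (0:ℝ) ≤ ε ^ (-(N q)) := Real.rpow_nonneg hε.1.le _
  have hu_cont : Continuous (u ε) := (hu_smooth ε hε01).continuous
  have hu_cs : HasCompactSupport (u ε) :=
    hK.of_isClosed_subset (isClosed_tsupport _) (hu_supp ε hε01)
  have hu_int : Integrable (u ε) := hu_cont.integrable_of_hasCompactSupport hu_cs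
  set uh := ftransform d (u ε) with huhdef
  have huh_cont : Continuous uh := ftransform_continuous _ hu_int
  have hglob : ∀ η, ‖uh η‖ ≤ C₀ * ε ^ (-(M:ℝ)) := by
    intro η
    refine le_trans (hhat ε hεε₀ η) ?_
    have h1 : ((1 + ‖η‖) ^ (d + 1))⁻¹ ≤ 1 := by
      rw [inv_le_one_iff₀]
      right
      exact one_le_pow₀ (by linarith [norm_nonneg η])
    calc C₀ * ε ^ (-(M:ℝ)) * ((1 + ‖η‖) ^ (d + 1))⁻¹ ≤ C₀ * ε ^ (-(M:ℝ)) * 1 :=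
          mul_le_mul_of_nonneg_left h1 (mul_nonneg hC₀.le hεM)
      _ = C₀ * ε ^ (-(M:ℝ)) := mul_one _
  have hkey := key_identity φ (u ε) hφcont hφint hg_cont hg_int hu_cont hu_cs y
  set h : EuclideanSpace ℝ (Fin d) → ℝ :=
    fun w => ‖𝓕 φ w‖ * ‖uh (y - (2*Real.pi) • w)‖ with hhdef
  have hh_nn : ∀ w, 0 ≤ h w := fun w => mul_nonneg (norm_nonneg _) (norm_nonneg _)
  have hh_cont : Continuous h := by
    exact (hg_cont.norm).mul ((huh_cont.comp (continuous_const.sub (continuous_const_smul _))).norm)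
  have hInt : Integrable h := by
    refine Integrable.mono' (hg_int.norm.mul_const (C₀ * ε ^ (-(M:ℝ))))
      hh_cont.aestronglyMeasurable (ae_of_all _ fun w => ?_)
    rw [Real.norm_eq_abs, _root_.abs_of_nonneg (hh_nn w)]
    exact mul_le_mul_of_nonneg_left (hglob _) (norm_nonneg _)
  set P : ℝ := (1 + ‖y‖) ^ q with hPdef
  have hP0 : 0 < P := by positivity
  have hFy : ‖ftransform d (fun x => φ x * u ε x) y‖ ≤ ∫ w, h w := by
    rw [hkey]
    refine (norm_integral_le_integral_norm _).trans (le_of_eq ?_)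
    simp [hhdef, huhdef, norm_mul]
  set A : Set (EuclideanSpace ℝ (Fin d)) := {w | 2*Real.pi*‖w‖ ≤ c*‖y‖} with hAdef
  have hAmeas : MeasurableSet A :=
    (isClosed_le (continuous_const.mul continuous_norm) continuous_const).measurableSet
  have hPhInt : Integrable (fun w => P * h w) := hInt.const_mul P
  have hsplit : ∫ w, P * h w = (∫ w in A, P * h w) + ∫ w in Aᶜ, P * h w :=
    (integral_add_compl hAmeas hPhInt).symm
  -- bound on A
  have hboundA : (∫ w in A, P * h w) ≤ A1 * ε ^ (-(N q)) := by
    have hpt : ∀ w ∈ A, P * h w ≤ ‖𝓕 φ w‖ * ((1-c)⁻¹ ^ q * (Cq * ε ^ (-(N q)))) := by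
      intro w hw
      have hw' : 2*Real.pi*‖w‖ ≤ c*‖y‖ := hw
      set η := y - (2*Real.pi) • w with hηdef
      have hdist : ‖η - y‖ ≤ c * ‖y‖ := by
        have h1 : η - y = -((2*Real.pi) • w) := by rw [hηdef]; abel
        rw [h1, norm_neg, norm_smul, Real.norm_eq_abs, abs_of_pos (by positivity)]
        exact hw'
      obtain ⟨hηΓ, hηn⟩ := hgeo y hy η hdist
      have hcb : (1 + ‖η‖) ^ q * ‖uh η‖ ≤ Cq * ε ^ (-(N q)) := hconeq η hηΓ ε hεεq
      have h1c : (1 - c) * (1 + ‖y‖) ≤ 1 + ‖η‖ := by nlinarith [norm_nonneg y]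
      have hPle : P ≤ (1-c)⁻¹ ^ q * (1 + ‖η‖) ^ q := by
        have h1c' : 1 + ‖y‖ ≤ (1-c)⁻¹ * (1 + ‖η‖) := by
          rw [le_inv_mul_iff₀ (by linarith)]
          exact h1c
        calc P = (1 + ‖y‖) ^ q := hPdef
          _ ≤ ((1-c)⁻¹ * (1 + ‖η‖)) ^ q := pow_le_pow_left₀ (by positivity) h1c' q
          _ = (1-c)⁻¹ ^ q * (1 + ‖η‖) ^ q := mul_pow _ _ _
      calc P * h w = P * (‖𝓕 φ w‖ * ‖uh η‖) := rfl
        _ ≤ ((1-c)⁻¹ ^ q * (1 + ‖η‖) ^ q) * (‖𝓕 φ w‖ * ‖uh η‖) :=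
            mul_le_mul_of_nonneg_right hPle (by positivity)
        _ = ‖𝓕 φ w‖ * ((1-c)⁻¹ ^ q * ((1 + ‖η‖) ^ q * ‖uh η‖)) := by ring
        _ ≤ ‖𝓕 φ w‖ * ((1-c)⁻¹ ^ q * (Cq * ε ^ (-(N q)))) := by
            exact mul_le_mul_of_nonneg_left (mul_le_mul_of_nonneg_left hcb
              (pow_nonneg (inv_nonneg.2 (by linarith)) q)) (norm_nonneg _)
    calc (∫ w in A, P * h w)
        ≤ ∫ w in A, ‖𝓕 φ w‖ * ((1-c)⁻¹ ^ q * (Cq * ε ^ (-(N q)))) :=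
          setIntegral_mono_on hPhInt.integrableOn
            ((hg_int.norm.mul_const _).integrableOn) hAmeas hpt
      _ = (∫ w in A, ‖𝓕 φ w‖) * ((1-c)⁻¹ ^ q * (Cq * ε ^ (-(N q)))) := integral_mul_const _ _
      _ ≤ Ig * ((1-c)⁻¹ ^ q * (Cq * ε ^ (-(N q)))) := by
          refine mul_le_mul_of_nonneg_right
            (setIntegral_le_integral hg_int.norm (ae_of_all _ fun w => norm_nonneg _)) ?_
          have : (0:ℝ) ≤ (1-c)⁻¹ ^ q := pow_nonneg (inv_nonneg.2 (by linarith)) q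
          positivity
      _ = A1 * ε ^ (-(N q)) := by rw [hA1def]; ring
  -- bound on Aᶜ
  have hboundB : (∫ w in Aᶜ, P * h w) ≤ A2 * ε ^ (-(M:ℝ)) := by
    have hpt : ∀ w ∈ Aᶜ, P * h w ≤
        (c'⁻¹ ^ q * (C₀ * ε ^ (-(M:ℝ))) * D) * (1 + ‖w‖) ^ (-((d:ℝ)+1)) := by
      intro w hw
      have hw' : c*‖y‖ < 2*Real.pi*‖w‖ := by
        have := hw
        simp only [hAdef, mem_compl_iff, mem_setOf_eq, not_le] at this
        exact this
      have hcw : c' * (1 + ‖y‖) ≤ 1 + ‖w‖ := by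
        have h2 : c' * ‖y‖ ≤ ‖w‖ := by
          have h3 : c' ≤ c / (2*Real.pi) := min_le_right _ _
          have h4 : (c / (2*Real.pi)) * ‖y‖ ≤ ‖w‖ := by
            rw [div_mul_eq_mul_div, div_le_iff₀ (by positivity)]
            nlinarith
          calc c' * ‖y‖ ≤ (c / (2*Real.pi)) * ‖y‖ :=
                mul_le_mul_of_nonneg_right h3 (norm_nonneg y)
            _ ≤ ‖w‖ := h4
        nlinarith [norm_nonneg w]
      have hPle : P ≤ c'⁻¹ ^ q * (1 + ‖w‖) ^ q := by
        have h1 : 1 + ‖y‖ ≤ c'⁻¹ * (1 + ‖w‖) := by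
          rw [le_inv_mul_iff₀ hc'0]
          exact hcw
        calc P = (1 + ‖y‖) ^ q := hPdef
          _ ≤ (c'⁻¹ * (1 + ‖w‖)) ^ q := pow_le_pow_left₀ (by positivity) h1 q
          _ = c'⁻¹ ^ q * (1 + ‖w‖) ^ q := mul_pow _ _ _
      have hgw : (1 + ‖w‖) ^ q * ‖𝓕 φ w‖ ≤ D * (1 + ‖w‖) ^ (-((d:ℝ)+1)) := by
        have hD' := hDle w
        have hBpos : (0:ℝ) < (1 + ‖w‖) ^ (d+1) := by positivity
        have hrpow : ((1 + ‖w‖ : ℝ)) ^ (-((d:ℝ)+1)) = ((1 + ‖w‖ : ℝ) ^ (d+1))⁻¹ := by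
          rw [← Real.rpow_natCast (1 + ‖w‖) (d+1), ← Real.rpow_neg (by positivity)]
          norm_num
        rw [hrpow, ← div_eq_mul_inv, le_div_iff₀ hBpos]
        have heq : (1 + ‖w‖:ℝ) ^ q * ‖𝓕 φ w‖ * (1 + ‖w‖) ^ (d+1)
            = (1 + ‖w‖) ^ (q + (d+1)) * ‖𝓕 φ w‖ := by rw [pow_add]; ring
        rw [heq]
        exact hD'
      calc P * h w = P * (‖𝓕 φ w‖ * ‖uh (y - (2*Real.pi) • w)‖) := rfl
        _ ≤ (c'⁻¹ ^ q * (1 + ‖w‖) ^ q) * (‖𝓕 φ w‖ * (C₀ * ε ^ (-(M:ℝ)))) := by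
            refine mul_le_mul hPle (mul_le_mul_of_nonneg_left (hglob _) (norm_nonneg _))
              (mul_nonneg (norm_nonneg _) (norm_nonneg _)) ?_
            positivity
        _ = (c'⁻¹ ^ q * (C₀ * ε ^ (-(M:ℝ)))) * ((1 + ‖w‖) ^ q * ‖𝓕 φ w‖) := by ring
        _ ≤ (c'⁻¹ ^ q * (C₀ * ε ^ (-(M:ℝ)))) * (D * (1 + ‖w‖) ^ (-((d:ℝ)+1))) := by
            refine mul_le_mul_of_nonneg_left hgw ?_
            have : (0:ℝ) ≤ c'⁻¹ ^ q := pow_nonneg (inv_nonneg.2 hc'0.le) q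
            positivity
        _ = (c'⁻¹ ^ q * (C₀ * ε ^ (-(M:ℝ))) * D) * (1 + ‖w‖) ^ (-((d:ℝ)+1)) := by ring
    calc (∫ w in Aᶜ, P * h w)
        ≤ ∫ w in Aᶜ, (c'⁻¹ ^ q * (C₀ * ε ^ (-(M:ℝ))) * D) * (1 + ‖w‖) ^ (-((d:ℝ)+1)) :=
          setIntegral_mono_on hPhInt.integrableOn
            ((hjap.const_mul _).integrableOn) hAmeas.compl hpt
      _ = (c'⁻¹ ^ q * (C₀ * ε ^ (-(M:ℝ))) * D) * ∫ w in Aᶜ, (1 + ‖w‖) ^ (-((d:ℝ)+1)) :=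
          integral_const_mul _ _
      _ ≤ (c'⁻¹ ^ q * (C₀ * ε ^ (-(M:ℝ))) * D) * IJ := by
          refine mul_le_mul_of_nonneg_left
            (setIntegral_le_integral hjap (ae_of_all _ fun w => Real.rpow_nonneg (by positivity) _)) ?_
          have : (0:ℝ) ≤ c'⁻¹ ^ q := pow_nonneg (inv_nonneg.2 hc'0.le) q
          positivity
      _ = A2 * ε ^ (-(M:ℝ)) := by rw [hA2def]; ring
  -- conclude
  have e1 : ε ^ (-(N q)) ≤ ε ^ (-(N' q)) := by
    apply Real.rpow_le_rpow_of_exponent_ge hε.1 hε01.2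
    linarith [hNle q]
  have e2 : ε ^ (-(M:ℝ)) ≤ ε ^ (-(N' q)) := by
    apply Real.rpow_le_rpow_of_exponent_ge hε.1 hε01.2
    linarith [hNle q, hNnn q]
  have e3 : (0:ℝ) ≤ ε ^ (-(N' q)) := Real.rpow_nonneg hε.1.le _
  have f1 : A1 * ε ^ (-(N q)) ≤ A1 * ε ^ (-(N' q)) := mul_le_mul_of_nonneg_left e1 hA1nn
  have f2 : A2 * ε ^ (-(M:ℝ)) ≤ A2 * ε ^ (-(N' q)) := mul_le_mul_of_nonneg_left e2 hA2nn
  have hfinal : P * ‖ftransform d (fun x => φ x * u ε x) y‖ ≤ (A1 + A2 + 1) * ε ^ (-(N' q)) := by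
    calc P * ‖ftransform d (fun x => φ x * u ε x) y‖ ≤ P * ∫ w, h w :=
          mul_le_mul_of_nonneg_left hFy hP0.le
      _ = ∫ w, P * h w := (integral_const_mul P h).symm
      _ = (∫ w in A, P * h w) + ∫ w in Aᶜ, P * h w := hsplit
      _ ≤ A1 * ε ^ (-(N q)) + A2 * ε ^ (-(M:ℝ)) := add_le_add hboundA hboundB
      _ ≤ (A1 + A2 + 1) * ε ^ (-(N' q)) := by linarith
  exact hfinal
end
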